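/- arXiv:2602.17579 — 5 statements merged into one kernel-verified Lean document; each statement's English description precedes it below -/
import Mathlib

section
/- Let d ≥ 1 and for each i ∈ {1,…,d} let Z_i be a finite set with |Z_i| ≥ 2, M_i an irreducible generator on Z_i, and ζ_i ∈ P_+(Z_i). Define Z = Π_{i=1}^d Z_i, ζ(z) = Π_{i=1}^d ζ_i(z_i), and M(z,z') = (1/d) Σ_{i=1}^d (M_i(z_i,z'_i) if z_j = z'_j for all j ≠ i, and 0 otherwise), which is an irreducible generator on Z. Then α_gLSI(ζ, M) = (1/d) · min_{1 ≤ i ≤ d} α_gLSI(ζ_i, M_i). -/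
open Finset Filter

/-- A generator (transition rate matrix) on a finite state space `Z`. -/
def IsGenerator {Z : Type*} [Fintype Z] (M : Z → Z → ℝ) : Prop :=
  (∀ z z' : Z, z ≠ z' → 0 ≤ M z z') ∧ ∀ z : Z, ∑ z' : Z, M z z' = 0

/-- Irreducibility of a generator. -/
def IsIrreducibleGen {Z : Type*} [Fintype Z] (M : Z → Z → ℝ) : Prop :=
  ∀ z z' : Z, z ≠ z' → ∃ (ℓ : ℕ) (p : ℕ → Z), 1 ≤ ℓ ∧ p 0 = z ∧ p ℓ = z' ∧
    ∀ i : ℕ, 1 ≤ i → i ≤ ℓ → 0 < M (p (i - 1)) (p i)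

/-- A probability measure on `Z`. -/
def IsProb {Z : Type*} [Fintype Z] (ζ : Z → ℝ) : Prop :=
  (∀ z, 0 ≤ ζ z) ∧ ∑ z : Z, ζ z = 1

/-- A strictly positive probability measure on `Z`. -/
def IsPosProb {Z : Type*} [Fintype Z] (ζ : Z → ℝ) : Prop :=
  (∀ z, 0 < ζ z) ∧ ∑ z : Z, ζ z = 1

/-- Expectation of `f` with respect to `ζ`. -/
noncomputable def expec {Z : Type*} [Fintype Z] (ζ f : Z → ℝ) : ℝ := ∑ z : Z, f z * ζ z

/-- Variance of `f` with respect to `ζ`. -/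
noncomputable def varWrt {Z : Type*} [Fintype Z] (ζ f : Z → ℝ) : ℝ :=
  expec ζ (fun z => f z ^ 2) - (expec ζ f) ^ 2

/-- Generalised Dirichlet form with respect to `ζ`. -/
noncomputable def dirichletForm {Z : Type*} [Fintype Z] (ζ f : Z → ℝ) (M : Z → Z → ℝ) : ℝ :=
  (1 / 2) * ∑ z : Z, ∑ z' : Z, M z z' * ζ z * (f z - f z') ^ 2

/-- A (strictly positive) probability density with respect to `ζ`. -/
def IsDensity {Z : Type*} [Fintype Z] (ζ φ : Z → ℝ) : Prop :=
  (∀ z, 0 < φ z) ∧ expec ζ φ = 1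

/-- Relative entropy with respect to `ζ`. -/
noncomputable def relEnt {Z : Type*} [Fintype Z] (ζ φ : Z → ℝ) : ℝ :=
  ∑ z : Z, φ z * Real.log (φ z) * ζ z

/-- Generalised Fisher information with respect to `ζ`. -/
noncomputable def fisherInfo {Z : Type*} [Fintype Z] (ζ φ : Z → ℝ) (M : Z → Z → ℝ) : ℝ :=
  ∑ z : Z, ∑ z' : Z, M z z' * ζ z * φ z * (φ z' / φ z - 1 - Real.log (φ z' / φ z))

/-- `f` is a nonconstant function. -/
def Nonconst {Z : Type*} (f : Z → ℝ) : Prop := ∃ z z' : Z, f z ≠ f z'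

/-- Generalised Poincaré constant. -/
noncomputable def gPI {Z : Type*} [Fintype Z] (ζ : Z → ℝ) (M : Z → Z → ℝ) : ℝ :=
  sInf { r : ℝ | ∃ f : Z → ℝ, Nonconst f ∧ r = dirichletForm ζ f M / varWrt ζ f }

/-- Generalised log-Sobolev constant. -/
noncomputable def gLSI {Z : Type*} [Fintype Z] (ζ : Z → ℝ) (M : Z → Z → ℝ) : ℝ :=
  sInf { r : ℝ | ∃ φ : Z → ℝ, IsDensity ζ φ ∧ φ ≠ (fun _ => 1) ∧
    r = fisherInfo ζ φ M / relEnt ζ φ }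

/-- Φ(t) = t - 1 - log t ≥ 0 for t > 0. -/
lemma Phi_nonneg {t : ℝ} (ht : 0 < t) : 0 ≤ t - 1 - Real.log t := by
  have := Real.log_le_sub_one_of_pos ht
  linarith

lemma xlogx_key {x : ℝ} (hx : 0 < x) : 0 ≤ x * Real.log x - x + 1 := by
  have h := Real.log_le_sub_one_of_pos (show (0:ℝ) < 1/x by positivity)
  rw [Real.log_div one_ne_zero (ne_of_gt hx), Real.log_one] at h
  have : -Real.log x ≤ 1/x - 1 := by linarith
  nlinarith [mul_le_mul_of_nonneg_left this (le_of_lt hx), mul_one_div_cancel (ne_of_gt hx)]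

lemma xlogx_key_pos {x : ℝ} (hx : 0 < x) (hx1 : x ≠ 1) : 0 < x * Real.log x - x + 1 := by
  have h := Real.log_lt_sub_one_of_pos (show (0:ℝ) < 1/x by positivity)
    (by simp [hx1, ne_of_gt hx, div_eq_one_iff_eq])
  rw [Real.log_div one_ne_zero (ne_of_gt hx), Real.log_one] at h
  have : -Real.log x < 1/x - 1 := by linarith
  nlinarith [mul_lt_mul_of_pos_left this hx, mul_one_div_cancel (ne_of_gt hx)]

lemma fisher_nonneg {Z : Type*} [Fintype Z] [DecidableEq Z] {ζ φ : Z → ℝ} {M : Z → Z → ℝ}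
    (hζ : ∀ z, 0 < ζ z) (hφ : ∀ z, 0 < φ z) (hM : ∀ z z', z ≠ z' → 0 ≤ M z z') :
    0 ≤ fisherInfo ζ φ M := by
  apply Finset.sum_nonneg; intro z _
  apply Finset.sum_nonneg; intro z' _
  by_cases h : z = z'
  · subst h
    rw [div_self (ne_of_gt (hφ z))]
    simp
  · have h1 : 0 < φ z' / φ z := div_pos (hφ z') (hφ z)
    exact mul_nonneg (mul_nonneg (mul_nonneg (hM z z' h) (hζ z).le) (hφ z).le) (Phi_nonneg h1)

lemma relEnt_eq {Z : Type*} [Fintype Z] {ζ φ : Z → ℝ} (hζ : ∑ z : Z, ζ z = 1)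
    (hφ : expec ζ φ = 1) :
    relEnt ζ φ = ∑ z : Z, (φ z * Real.log (φ z) - φ z + 1) * ζ z := by
  unfold relEnt
  unfold expec at hφ
  simp only [sub_mul, add_mul, one_mul, Finset.sum_add_distrib, Finset.sum_sub_distrib, hφ, hζ]
  ring

lemma relEnt_nonneg {Z : Type*} [Fintype Z] {ζ φ : Z → ℝ} (hζ : IsPosProb ζ)
    (hφ : IsDensity ζ φ) : 0 ≤ relEnt ζ φ := by
  rw [relEnt_eq hζ.2 hφ.2]
  apply Finset.sum_nonneg; intro z _
  exact mul_nonneg (xlogx_key (hφ.1 z)) (hζ.1 z).le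

lemma relEnt_pos {Z : Type*} [Fintype Z] {ζ φ : Z → ℝ} (hζ : IsPosProb ζ)
    (hφ : IsDensity ζ φ) (hne : φ ≠ (fun _ => 1)) : 0 < relEnt ζ φ := by
  rw [relEnt_eq hζ.2 hφ.2]
  obtain ⟨z0, hz0⟩ : ∃ z0, φ z0 ≠ 1 := by
    by_contra h; push_neg at h; exact hne (funext h)
  apply Finset.sum_pos' (fun z _ => mul_nonneg (xlogx_key (hφ.1 z)) (hζ.1 z).le)
  exact ⟨z0, Finset.mem_univ _, mul_pos (xlogx_key_pos (hφ.1 z0) hz0) (hζ.1 z0)⟩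

/-- existence of a nonconstant density -/
lemma exists_density {Z : Type*} [Fintype Z] [DecidableEq Z] {ζ : Z → ℝ}
    (hζ : IsPosProb ζ) (hcard : 2 ≤ Fintype.card Z) :
    ∃ φ : Z → ℝ, IsDensity ζ φ ∧ φ ≠ (fun _ => 1) := by
  obtain ⟨z0⟩ : Nonempty Z := Fintype.card_pos_iff.mp (by omega)
  have hz0lt : ζ z0 < 1 := by
    obtain ⟨z1, hz1⟩ : ∃ z1, z1 ≠ z0 := Fintype.exists_ne_of_one_lt_card (by omega) z0
    have : ζ z1 + ζ z0 ≤ ∑ z : Z, ζ z := by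
      rw [← Finset.sum_pair hz1]
      exact Finset.sum_le_sum_of_subset_of_nonneg (Finset.subset_univ _)
        (fun z _ _ => (hζ.1 z).le)
    rw [hζ.2] at this
    have := hζ.1 z1; linarith
  refine ⟨fun z => if z = z0 then 1 + (1 - ζ z0)/2 else 1 - ζ z0/2, ⟨?_, ?_⟩, ?_⟩
  · intro z
    by_cases h : z = z0 <;> simp [h] <;> nlinarith [hζ.1 z0]
  · unfold expec
    have hrw : ∀ z : Z, (if z = z0 then 1 + (1 - ζ z0)/2 else 1 - ζ z0/2) * ζ z
        = (1 - ζ z0/2) * ζ z + (if z = z0 then ((1 - ζ z0)/2 + ζ z0/2) * ζ z else 0) := by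
      intro z; by_cases h : z = z0 <;> simp [h] <;> try ring
    simp only [hrw]
    rw [Finset.sum_add_distrib, Finset.sum_ite_eq' Finset.univ z0]
    rw [← Finset.mul_sum, hζ.2]
    simp; ring
  · intro h
    have := congrFun h z0
    simp only [if_pos rfl] at this
    simp at this
    nlinarith

lemma relEnt_one {Z : Type*} [Fintype Z] (ζ : Z → ℝ) : relEnt ζ (fun _ => 1) = 0 := by
  unfold relEnt; simp

lemma fisher_one {Z : Type*} [Fintype Z] (ζ : Z → ℝ) (M : Z → Z → ℝ) :
    fisherInfo ζ (fun _ => 1) M = 0 := by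
  unfold fisherInfo; simp

lemma gLSI_ratio_mem_nonneg {Z : Type*} [Fintype Z] [DecidableEq Z] {ζ : Z → ℝ}
    {M : Z → Z → ℝ} (hζ : IsPosProb ζ) (hM : ∀ z z', z ≠ z' → 0 ≤ M z z') :
    ∀ r ∈ { r : ℝ | ∃ φ : Z → ℝ, IsDensity ζ φ ∧ φ ≠ (fun _ => 1) ∧
      r = fisherInfo ζ φ M / relEnt ζ φ }, 0 ≤ r := by
  rintro r ⟨φ, hφ, hne, rfl⟩
  exact div_nonneg (fisher_nonneg hζ.1 hφ.1 hM) (relEnt_nonneg hζ hφ)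

lemma gLSI_nonneg {Z : Type*} [Fintype Z] [DecidableEq Z] {ζ : Z → ℝ}
    {M : Z → Z → ℝ} (hζ : IsPosProb ζ) (hM : ∀ z z', z ≠ z' → 0 ≤ M z z') :
    0 ≤ gLSI ζ M :=
  Real.sInf_nonneg (gLSI_ratio_mem_nonneg hζ hM)

lemma gLSI_mul_relEnt_le {Z : Type*} [Fintype Z] [DecidableEq Z] {ζ φ : Z → ℝ}
    {M : Z → Z → ℝ} (hζ : IsPosProb ζ) (hM : ∀ z z', z ≠ z' → 0 ≤ M z z')
    (hφ : IsDensity ζ φ) :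
    gLSI ζ M * relEnt ζ φ ≤ fisherInfo ζ φ M := by
  by_cases hne : φ = (fun _ => 1)
  · subst hne; rw [relEnt_one, fisher_one, mul_zero]
  · have hent := relEnt_pos hζ hφ hne
    have hle : gLSI ζ M ≤ fisherInfo ζ φ M / relEnt ζ φ := by
      apply csInf_le ⟨0, fun r hr => gLSI_ratio_mem_nonneg hζ hM r hr⟩
      exact ⟨φ, hφ, hne, rfl⟩
    calc gLSI ζ M * relEnt ζ φ ≤ (fisherInfo ζ φ M / relEnt ζ φ) * relEnt ζ φ :=
          mul_le_mul_of_nonneg_right hle hent.le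
      _ = fisherInfo ζ φ M := div_mul_cancel₀ _ (ne_of_gt hent)

section Product

open Function

variable {d : ℕ} {Z : Fin d → Type*} [∀ i, Fintype (Z i)] [∀ i, DecidableEq (Z i)]

/-- product measure -/
noncomputable def pz (ζi : ∀ i, Z i → ℝ) (z : ∀ i, Z i) : ℝ := ∏ i, ζi i (z i)

/-- integrate out coordinate i -/
noncomputable def condE (ζi : ∀ i, Z i → ℝ) (i : Fin d) (f : (∀ j, Z j) → ℝ)
    (z : ∀ j, Z j) : ℝ := ∑ x : Z i, ζi i x * f (update z i x)

/-- marginal conditioning on the first k coordinates -/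
noncomputable def marg (ζi : ∀ i, Z i → ℝ) (k : ℕ) (f : (∀ j, Z j) → ℝ)
    (z : ∀ j, Z j) : ℝ :=
  ∑ w : ∀ j, Z j, pz ζi w * f (fun j => if (j : ℕ) < k then z j else w j)

variable {ζi : ∀ i, Z i → ℝ} (hζi : ∀ i, IsPosProb (ζi i))
include hζi
set_option linter.unusedSectionVars false

lemma pz_pos (z : ∀ i, Z i) : 0 < pz ζi z :=
  Finset.prod_pos fun i _ => (hζi i).1 (z i)

lemma sum_pz : ∑ z : ∀ i, Z i, pz ζi z = 1 := by
  unfold pz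
  rw [← Fintype.prod_sum (fun i x => ζi i x)]
  exact Finset.prod_eq_one fun i _ => (hζi i).2

lemma pz_update (z : ∀ j, Z j) (i : Fin d) (x : Z i) :
    pz ζi (update z i x) * ζi i (z i) = pz ζi z * ζi i x := by
  have key : ∀ y : Z i, pz ζi (update z i y)
      = ζi i y * ∏ j ∈ Finset.univ \ {i}, ζi j (z j) := by
    intro y
    unfold pz
    have h1 : (fun j => ζi j (update z i y j)) = update (fun j => ζi j (z j)) i (ζi i y) := by
      funext j
      by_cases h : j = i
      · subst h; simp
      · simp [update_of_ne h]
    calc ∏ j, ζi j (update z i y j) = ∏ j, update (fun j => ζi j (z j)) i (ζi i y) j := by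
          rw [h1]
      _ = ζi i y * ∏ j ∈ Finset.univ \ {i}, ζi j (z j) :=
          Finset.prod_update_of_mem (Finset.mem_univ i) _ _
  have key2 : pz ζi z = ζi i (z i) * ∏ j ∈ Finset.univ \ {i}, ζi j (z j) := by
    have := key (z i)
    rwa [update_eq_self] at this
  rw [key x, key2]; ring

/-- Fubini / change of variables for one coordinate. -/
lemma FUB (i : Fin d) (F : (∀ j, Z j) → Z i → ℝ) :
    ∑ z : ∀ j, Z j, ∑ x : Z i, pz ζi z * ζi i x * F (update z i x) (z i)
      = ∑ z : ∀ j, Z j, ∑ x : Z i, pz ζi z * ζi i x * F z x := by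
  rw [← Finset.sum_product' (f := fun z x => pz ζi z * ζi i x * F (update z i x) (z i)),
      ← Finset.sum_product' (f := fun z x => pz ζi z * ζi i x * F z x)]
  refine Finset.sum_equiv ⟨fun p => (update p.1 i p.2, p.1 i),
    fun p => (update p.1 i p.2, p.1 i), fun p => ?_, fun p => ?_⟩ (by simp) ?_
  · simp [Function.update_idem]
  · simp [Function.update_idem]
  · rintro ⟨z, x⟩ -
    simp only [Equiv.coe_fn_mk]
    have h1 : update (update z i x) i (z i) = z := by
      rw [Function.update_idem, update_eq_self]
    rw [← pz_update hζi z i x]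

lemma condE_update (i : Fin d) (f : (∀ j, Z j) → ℝ) (z : ∀ j, Z j) (y : Z i) :
    condE ζi i f (update z i y) = condE ζi i f z := by
  unfold condE
  simp [Function.update_idem]

lemma condE_pos (i : Fin d) [Nonempty (Z i)] {f : (∀ j, Z j) → ℝ} (hf : ∀ z, 0 < f z)
    (z : ∀ j, Z j) : 0 < condE ζi i f z :=
  Finset.sum_pos (fun x _ => mul_pos ((hζi i).1 x) (hf _)) Finset.univ_nonempty

/-- expectation of condE equals expectation -/
lemma expec_condE (i : Fin d) (f : (∀ j, Z j) → ℝ) :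
    ∑ z : ∀ j, Z j, pz ζi z * condE ζi i f z = ∑ z : ∀ j, Z j, pz ζi z * f z := by
  have h := FUB hζi i (fun z _ => f z)
  calc ∑ z : ∀ j, Z j, pz ζi z * condE ζi i f z
      = ∑ z : ∀ j, Z j, ∑ x : Z i, pz ζi z * ζi i x * f (update z i x) := by
        unfold condE; congr 1; funext z; rw [Finset.mul_sum]; congr 1; funext x; ring
    _ = ∑ z : ∀ j, Z j, ∑ x : Z i, pz ζi z * ζi i x * f z := h
    _ = ∑ z : ∀ j, Z j, (∑ x : Z i, ζi i x) * (pz ζi z * f z) := by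
        congr 1; funext z; rw [Finset.sum_mul]; congr 1; funext x; ring
    _ = ∑ z : ∀ j, Z j, pz ζi z * f z := by rw [(hζi i).2]; simp

variable [∀ i, Nonempty (Z i)]

lemma marg_zero (f : (∀ j, Z j) → ℝ) (z : ∀ j, Z j) :
    marg ζi 0 f z = ∑ w : ∀ j, Z j, pz ζi w * f w := by
  unfold marg; simp

lemma marg_d (f : (∀ j, Z j) → ℝ) (z : ∀ j, Z j) : marg ζi d f z = f z := by
  unfold marg
  have h : ∀ w : ∀ j, Z j, (fun (j : Fin d) => if (j : ℕ) < d then z j else w j) = z := by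
    intro w; funext j; simp [j.isLt]
  simp only [h]
  rw [← Finset.sum_mul, sum_pz hζi, one_mul]

lemma marg_pos (k : ℕ) {f : (∀ j, Z j) → ℝ} (hf : ∀ z, 0 < f z) (z : ∀ j, Z j) :
    0 < marg ζi k f z :=
  Finset.sum_pos (fun w _ => mul_pos (pz_pos hζi w) (hf _)) Finset.univ_nonempty

lemma marg_update (k : Fin d) (f : (∀ j, Z j) → ℝ) (z : ∀ j, Z j) (x : Z k) :
    marg ζi (k : ℕ) f (update z k x) = marg ζi (k : ℕ) f z := by
  unfold marg
  apply Finset.sum_congr rfl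
  intro w _
  have hAB : (fun (j : Fin d) => if (j : ℕ) < (k : ℕ) then update z k x j else w j)
      = (fun (j : Fin d) => if (j : ℕ) < (k : ℕ) then z j else w j) := by
    funext j
    by_cases h : (j : ℕ) < (k : ℕ)
    · have hjk : j ≠ k := fun e => by subst e; exact lt_irrefl _ h
      simp [h, update_of_ne hjk]
    · simp [h]
  rw [hAB]

lemma merge_update (k : Fin d) (z w : ∀ j, Z j) (x : Z k) :
    (fun (j : Fin d) => if (j : ℕ) < (k : ℕ) + 1 then (update z k x) j else w j)
      = (fun (j : Fin d) => if (j : ℕ) < (k : ℕ) then z j else (update w k x) j) := by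
  funext j
  rcases lt_trichotomy (j : ℕ) (k : ℕ) with h | h | h
  · have hjk : j ≠ k := fun e => by subst e; exact lt_irrefl _ h
    rw [if_pos (by omega), if_pos h, update_of_ne hjk]
  · have hjk : j = k := Fin.ext h
    subst hjk
    rw [if_pos (by omega), if_neg (by omega), update_self, update_self]
  · have hjk : j ≠ k := fun e => by subst e; exact lt_irrefl _ h
    rw [if_neg (by omega), if_neg (by omega), update_of_ne hjk]

lemma marg_succ (k : Fin d) (f : (∀ j, Z j) → ℝ) (z : ∀ j, Z j) :
    ∑ x : Z k, ζi k x * marg ζi ((k : ℕ) + 1) f (update z k x) = marg ζi (k : ℕ) f z := by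
  unfold marg
  have h := FUB hζi k (fun w _ => f (fun j => if (j : ℕ) < (k : ℕ) then z j else w j))
  calc ∑ x : Z k, ζi k x * ∑ w : ∀ j, Z j,
          pz ζi w * f (fun j => if (j : ℕ) < (k : ℕ) + 1 then (update z k x) j else w j)
      = ∑ w : ∀ j, Z j, ∑ x : Z k, pz ζi w * ζi k x *
          f (fun j => if (j : ℕ) < (k : ℕ) then z j else (update w k x) j) := by
        rw [Finset.sum_comm]
        apply Finset.sum_congr rfl; intro x _
        rw [Finset.mul_sum]
        apply Finset.sum_congr rfl; intro w _
        rw [merge_update hζi]; ring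
    _ = ∑ w : ∀ j, Z j, ∑ x : Z k, pz ζi w * ζi k x *
          f (fun j => if (j : ℕ) < (k : ℕ) then z j else w j) := h
    _ = ∑ w : ∀ j, Z j, pz ζi w * f (fun j => if (j : ℕ) < (k : ℕ) then z j else w j) := by
        apply Finset.sum_congr rfl; intro w _
        calc ∑ x : Z k, pz ζi w * ζi k x *
              f (fun j => if (j : ℕ) < (k : ℕ) then z j else w j)
            = (∑ x : Z k, ζi k x) *
              (pz ζi w * f (fun j => if (j : ℕ) < (k : ℕ) then z j else w j)) := by
              rw [Finset.sum_mul]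
              apply Finset.sum_congr rfl; intro x _; ring
          _ = pz ζi w * f (fun j => if (j : ℕ) < (k : ℕ) then z j else w j) := by
              rw [(hζi k).2, one_mul]

lemma EABC (k : Fin d) {φ : (∀ j, Z j) → ℝ} (hφ : ∀ z, 0 < φ z) :
    ∑ z : ∀ j, Z j, pz ζi z *
        (marg ζi ((k : ℕ) + 1) φ z * condE ζi k φ z / marg ζi (k : ℕ) φ z)
      = ∑ z : ∀ j, Z j, pz ζi z * φ z := by
  have hC : ∀ z, 0 < marg ζi (k : ℕ) φ z := marg_pos hζi _ hφ
  have h := FUB hζi k (fun z _ =>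
    marg ζi ((k : ℕ) + 1) φ z * (condE ζi k φ z / marg ζi (k : ℕ) φ z))
  have e1 : ∑ z : ∀ j, Z j, ∑ x : Z k, pz ζi z * ζi k x *
      (marg ζi ((k : ℕ) + 1) φ (update z k x) *
        (condE ζi k φ (update z k x) / marg ζi (k : ℕ) φ (update z k x)))
      = ∑ z : ∀ j, Z j, pz ζi z * condE ζi k φ z := by
    apply Finset.sum_congr rfl
    intro z _
    have hpt : ∀ x : Z k, pz ζi z * ζi k x *
        (marg ζi ((k : ℕ) + 1) φ (update z k x) *
          (condE ζi k φ (update z k x) / marg ζi (k : ℕ) φ (update z k x)))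
        = (pz ζi z * (condE ζi k φ z / marg ζi (k : ℕ) φ z)) *
          (ζi k x * marg ζi ((k : ℕ) + 1) φ (update z k x)) := by
      intro x
      rw [condE_update hζi, marg_update hζi]
      ring
    rw [Finset.sum_congr rfl (fun x _ => hpt x), ← Finset.mul_sum, marg_succ hζi,
      mul_assoc, div_mul_cancel₀ _ (ne_of_gt (hC z))]
  calc ∑ z : ∀ j, Z j, pz ζi z *
        (marg ζi ((k : ℕ) + 1) φ z * condE ζi k φ z / marg ζi (k : ℕ) φ z)
      = ∑ z : ∀ j, Z j, ∑ x : Z k, pz ζi z * ζi k x *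
          (marg ζi ((k : ℕ) + 1) φ z * (condE ζi k φ z / marg ζi (k : ℕ) φ z)) := by
        apply Finset.sum_congr rfl; intro z _
        rw [show (∑ x : Z k, pz ζi z * ζi k x * (marg ζi ((k : ℕ) + 1) φ z *
            (condE ζi k φ z / marg ζi (k : ℕ) φ z)))
          = (∑ x : Z k, ζi k x) * (pz ζi z * (marg ζi ((k : ℕ) + 1) φ z *
            (condE ζi k φ z / marg ζi (k : ℕ) φ z))) from by
            rw [Finset.sum_mul]; apply Finset.sum_congr rfl; intro x _; ring]
        rw [(hζi k).2, one_mul, mul_div_assoc]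
    _ = ∑ z : ∀ j, Z j, ∑ x : Z k, pz ζi z * ζi k x *
          (marg ζi ((k : ℕ) + 1) φ (update z k x) *
            (condE ζi k φ (update z k x) / marg ζi (k : ℕ) φ (update z k x))) := h.symm
    _ = ∑ z : ∀ j, Z j, pz ζi z * condE ζi k φ z := e1
    _ = ∑ z : ∀ j, Z j, pz ζi z * φ z := expec_condE hζi k φ

lemma jensen_step (k : Fin d) {φ : (∀ j, Z j) → ℝ} (hφ : ∀ z, 0 < φ z) :
    ∑ z : ∀ j, Z j, pz ζi z * φ z *
        (Real.log (marg ζi ((k : ℕ) + 1) φ z) - Real.log (marg ζi (k : ℕ) φ z))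
      ≤ ∑ z : ∀ j, Z j, pz ζi z * φ z *
        (Real.log (φ z) - Real.log (condE ζi k φ z)) := by
  have hA : ∀ z, 0 < marg ζi ((k : ℕ) + 1) φ z := marg_pos hζi _ hφ
  have hC : ∀ z, 0 < marg ζi (k : ℕ) φ z := marg_pos hζi _ hφ
  have hB : ∀ z, 0 < condE ζi k φ z := condE_pos hζi k hφ
  rw [← sub_nonpos, ← Finset.sum_sub_distrib]
  have key : ∀ z : ∀ j, Z j, pz ζi z * φ z *
        (Real.log (marg ζi ((k : ℕ) + 1) φ z) - Real.log (marg ζi (k : ℕ) φ z))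
      - pz ζi z * φ z * (Real.log (φ z) - Real.log (condE ζi k φ z))
      = pz ζi z * φ z * Real.log (marg ζi ((k : ℕ) + 1) φ z * condE ζi k φ z
          / (marg ζi (k : ℕ) φ z * φ z)) := by
    intro z
    rw [Real.log_div (by exact ne_of_gt (mul_pos (hA z) (hB z)))
        (by exact ne_of_gt (mul_pos (hC z) (hφ z))),
      Real.log_mul (ne_of_gt (hA z)) (ne_of_gt (hB z)),
      Real.log_mul (ne_of_gt (hC z)) (ne_of_gt (hφ z))]
    ring
  rw [Finset.sum_congr rfl (fun z _ => key z)]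
  have bound : ∑ z : ∀ j, Z j, pz ζi z * φ z * Real.log (marg ζi ((k : ℕ) + 1) φ z *
        condE ζi k φ z / (marg ζi (k : ℕ) φ z * φ z))
      ≤ ∑ z : ∀ j, Z j, pz ζi z * φ z * (marg ζi ((k : ℕ) + 1) φ z *
        condE ζi k φ z / (marg ζi (k : ℕ) φ z * φ z) - 1) := by
    apply Finset.sum_le_sum
    intro z _
    exact mul_le_mul_of_nonneg_left
      (Real.log_le_sub_one_of_pos
        (div_pos (mul_pos (hA z) (hB z)) (mul_pos (hC z) (hφ z))))
      (mul_pos (pz_pos hζi z) (hφ z)).le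
  refine le_trans bound (le_of_eq ?_)
  have expand : ∀ z : ∀ j, Z j, pz ζi z * φ z * (marg ζi ((k : ℕ) + 1) φ z *
        condE ζi k φ z / (marg ζi (k : ℕ) φ z * φ z) - 1)
      = pz ζi z * (marg ζi ((k : ℕ) + 1) φ z * condE ζi k φ z / marg ζi (k : ℕ) φ z)
        - pz ζi z * φ z := by
    intro z
    field_simp [ne_of_gt (hφ z), ne_of_gt (hC z)]
  rw [Finset.sum_congr rfl (fun z _ => expand z), Finset.sum_sub_distrib,
    EABC hζi k hφ, sub_self]

lemma entropy_subadd {φ : (∀ j, Z j) → ℝ} (hφ : ∀ z, 0 < φ z)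
    (hφ1 : ∑ z : ∀ j, Z j, pz ζi z * φ z = 1) :
    ∑ z : ∀ j, Z j, pz ζi z * φ z * Real.log (φ z)
      ≤ ∑ k : Fin d, ∑ z : ∀ j, Z j, pz ζi z * φ z *
          (Real.log (φ z) - Real.log (condE ζi k φ z)) := by
  have tele : ∀ z : ∀ j, Z j, Real.log (φ z) = ∑ k ∈ Finset.range d,
      (Real.log (marg ζi (k + 1) φ z) - Real.log (marg ζi k φ z)) := by
    intro z
    rw [Finset.sum_range_sub (fun k => Real.log (marg ζi k φ z))]
    rw [marg_d hζi φ z, marg_zero hζi φ z, hφ1, Real.log_one, sub_zero]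
  calc ∑ z : ∀ j, Z j, pz ζi z * φ z * Real.log (φ z)
      = ∑ z : ∀ j, Z j, ∑ k ∈ Finset.range d, pz ζi z * φ z *
          (Real.log (marg ζi (k + 1) φ z) - Real.log (marg ζi k φ z)) := by
        apply Finset.sum_congr rfl; intro z _
        rw [tele z, Finset.mul_sum]
    _ = ∑ k ∈ Finset.range d, ∑ z : ∀ j, Z j, pz ζi z * φ z *
          (Real.log (marg ζi (k + 1) φ z) - Real.log (marg ζi k φ z)) := Finset.sum_comm
    _ = ∑ k : Fin d, ∑ z : ∀ j, Z j, pz ζi z * φ z *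
          (Real.log (marg ζi ((k : ℕ) + 1) φ z) - Real.log (marg ζi (k : ℕ) φ z)) :=
        (Fin.sum_univ_eq_sum_range (fun k => ∑ z : ∀ j, Z j, pz ζi z * φ z *
          (Real.log (marg ζi (k + 1) φ z) - Real.log (marg ζi k φ z))) d).symm
    _ ≤ ∑ k : Fin d, ∑ z : ∀ j, Z j, pz ζi z * φ z *
          (Real.log (φ z) - Real.log (condE ζi k φ z)) :=
        Finset.sum_le_sum fun k _ => jensen_step hζi k hφ

lemma sum_offdiag (i : Fin d) (z : ∀ j, Z j) (m : Z i → ℝ) (g : (∀ j, Z j) → ℝ) :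
    ∑ z' : ∀ j, Z j, (if ∀ j, j ≠ i → z j = z' j then m (z' i) else 0) * g z'
      = ∑ x : Z i, m x * g (update z i x) := by
  have hsplit : ∀ z' : ∀ j, Z j, (if ∀ j, j ≠ i → z j = z' j then m (z' i) else 0) * g z'
      = if ∀ j, j ≠ i → z j = z' j then m (z' i) * g z' else 0 := by
    intro z'; split <;> simp
  rw [Finset.sum_congr rfl fun z' _ => hsplit z', Finset.sum_ite, Finset.sum_const_zero,
    add_zero]
  have hupd : ∀ a : ∀ j, Z j, (∀ j, j ≠ i → z j = a j) → update z i (a i) = a := by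
    intro a ha
    funext j
    by_cases h : j = i
    · subst h; rw [update_self]
    · rw [update_of_ne h]; exact ha j h
  apply Finset.sum_bij' (i := fun z' _ => z' i) (j := fun x _ => update z i x)
  · intro a _; exact Finset.mem_univ _
  · intro x _
    simp only [Finset.mem_filter, Finset.mem_univ, true_and]
    intro j hj
    rw [update_of_ne hj]
  · intro a ha
    simp only [Finset.mem_filter, Finset.mem_univ, true_and] at ha
    exact hupd a ha
  · intro x _; rw [update_self]
  · intro a ha
    simp only [Finset.mem_filter, Finset.mem_univ, true_and] at ha
    rw [hupd a ha]

lemma fisher_decomp {φ : (∀ j, Z j) → ℝ}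
    (Mi : ∀ i, Z i → Z i → ℝ) (M : (∀ j, Z j) → (∀ j, Z j) → ℝ)
    (hM : ∀ z z', M z z' = (1 / (d : ℝ)) * ∑ i,
      (if ∀ j, j ≠ i → z j = z' j then Mi i (z i) (z' i) else 0)) :
    fisherInfo (pz ζi) φ M = (1 / (d : ℝ)) * ∑ i : Fin d, ∑ z : ∀ j, Z j, ∑ x : Z i,
      Mi i (z i) x * pz ζi z * φ z *
        (φ (update z i x) / φ z - 1 - Real.log (φ (update z i x) / φ z)) := by
  unfold fisherInfo
  have step : ∀ z z' : ∀ j, Z j, M z z' * pz ζi z * φ z *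
        (φ z' / φ z - 1 - Real.log (φ z' / φ z))
      = (1 / (d : ℝ)) * ∑ i, (if ∀ j, j ≠ i → z j = z' j then Mi i (z i) (z' i) else 0) *
          (pz ζi z * φ z * (φ z' / φ z - 1 - Real.log (φ z' / φ z))) := by
    intro z z'
    rw [hM, ← Finset.sum_mul]
    ring
  calc ∑ z : ∀ j, Z j, ∑ z' : ∀ j, Z j, M z z' * pz ζi z * φ z *
        (φ z' / φ z - 1 - Real.log (φ z' / φ z))
      = (1 / (d : ℝ)) * ∑ z : ∀ j, Z j, ∑ z' : ∀ j, Z j, ∑ i,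
          (if ∀ j, j ≠ i → z j = z' j then Mi i (z i) (z' i) else 0) *
            (pz ζi z * φ z * (φ z' / φ z - 1 - Real.log (φ z' / φ z))) := by
        rw [Finset.mul_sum]
        apply Finset.sum_congr rfl; intro z _
        rw [Finset.mul_sum]
        apply Finset.sum_congr rfl; intro z' _
        exact step z z'
    _ = (1 / (d : ℝ)) * ∑ i : Fin d, ∑ z : ∀ j, Z j, ∑ z' : ∀ j, Z j,
          (if ∀ j, j ≠ i → z j = z' j then Mi i (z i) (z' i) else 0) *
            (pz ζi z * φ z * (φ z' / φ z - 1 - Real.log (φ z' / φ z))) := by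
        congr 1
        have e1 : ∀ z : ∀ j, Z j, (∑ z' : ∀ j, Z j, ∑ i : Fin d,
            (if ∀ j, j ≠ i → z j = z' j then Mi i (z i) (z' i) else 0) *
              (pz ζi z * φ z * (φ z' / φ z - 1 - Real.log (φ z' / φ z))))
            = ∑ i : Fin d, ∑ z' : ∀ j, Z j,
            (if ∀ j, j ≠ i → z j = z' j then Mi i (z i) (z' i) else 0) *
              (pz ζi z * φ z * (φ z' / φ z - 1 - Real.log (φ z' / φ z))) :=
          fun z => Finset.sum_comm
        rw [Finset.sum_congr rfl fun z _ => e1 z]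
        exact Finset.sum_comm
    _ = (1 / (d : ℝ)) * ∑ i : Fin d, ∑ z : ∀ j, Z j, ∑ x : Z i,
          Mi i (z i) x * pz ζi z * φ z *
            (φ (update z i x) / φ z - 1 - Real.log (φ (update z i x) / φ z)) := by
        congr 1
        apply Finset.sum_congr rfl; intro i _
        apply Finset.sum_congr rfl; intro z _
        rw [sum_offdiag hζi i z (fun x => Mi i (z i) x)
          (fun z' => pz ζi z * φ z * (φ z' / φ z - 1 - Real.log (φ z' / φ z)))]
        apply Finset.sum_congr rfl; intro x _
        ring

lemma coord_bound (i : Fin d) (Mi : Z i → Z i → ℝ) (hMi : ∀ x x' : Z i, x ≠ x' → 0 ≤ Mi x x')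
    {φ : (∀ j, Z j) → ℝ} (hφ : ∀ z, 0 < φ z) :
    gLSI (ζi i) Mi * ∑ z : ∀ j, Z j, pz ζi z * φ z *
        (Real.log (φ z) - Real.log (condE ζi i φ z))
      ≤ ∑ z : ∀ j, Z j, ∑ x : Z i, Mi (z i) x * pz ζi z * φ z *
        (φ (update z i x) / φ z - 1 - Real.log (φ (update z i x) / φ z)) := by
  have hB : ∀ z, 0 < condE ζi i φ z := condE_pos hζi i hφ
  set ψ : (∀ j, Z j) → Z i → ℝ := fun z x => φ (update z i x) / condE ζi i φ z with hψ
  have hψdens : ∀ z, IsDensity (ζi i) (ψ z) := by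
    intro z
    refine ⟨fun x => div_pos (hφ _) (hB z), ?_⟩
    unfold expec
    have hterm : ∀ x : Z i, ψ z x * ζi i x = (ζi i x * φ (update z i x)) / condE ζi i φ z := by
      intro x; rw [hψ]; ring
    rw [Finset.sum_congr rfl fun x _ => hterm x, ← Finset.sum_div]
    exact div_self (ne_of_gt (hB z))
  have hratio : ∀ (z : ∀ j, Z j) (x x' : Z i),
      ψ z x' / ψ z x = φ (update z i x') / φ (update z i x) := by
    intro z x x'
    rw [hψ]
    rw [div_div_div_cancel_right₀]
    exact ne_of_gt (hB z)
  have entid : ∑ z : ∀ j, Z j, pz ζi z * φ z * (Real.log (φ z) - Real.log (condE ζi i φ z))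
      = ∑ z : ∀ j, Z j, pz ζi z * (condE ζi i φ z * relEnt (ζi i) (ψ z)) := by
    have h := FUB hζi i (fun z _ => φ z * (Real.log (φ z) - Real.log (condE ζi i φ z)))
    calc ∑ z : ∀ j, Z j, pz ζi z * φ z * (Real.log (φ z) - Real.log (condE ζi i φ z))
        = ∑ z : ∀ j, Z j, ∑ x : Z i, pz ζi z * ζi i x *
            (φ z * (Real.log (φ z) - Real.log (condE ζi i φ z))) := by
          apply Finset.sum_congr rfl; intro z _
          rw [show (∑ x : Z i, pz ζi z * ζi i x *
              (φ z * (Real.log (φ z) - Real.log (condE ζi i φ z))))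
            = (∑ x : Z i, ζi i x) * (pz ζi z *
              (φ z * (Real.log (φ z) - Real.log (condE ζi i φ z)))) from by
              rw [Finset.sum_mul]; apply Finset.sum_congr rfl; intro x _; ring]
          rw [(hζi i).2, one_mul]; ring
      _ = ∑ z : ∀ j, Z j, ∑ x : Z i, pz ζi z * ζi i x *
            (φ (update z i x) * (Real.log (φ (update z i x))
              - Real.log (condE ζi i φ (update z i x)))) := h.symm
      _ = ∑ z : ∀ j, Z j, pz ζi z * (condE ζi i φ z * relEnt (ζi i) (ψ z)) := by
          apply Finset.sum_congr rfl; intro z _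
          unfold relEnt
          rw [Finset.mul_sum, Finset.mul_sum]
          apply Finset.sum_congr rfl; intro x _
          rw [condE_update hζi, hψ,
            Real.log_div (ne_of_gt (hφ _)) (ne_of_gt (hB z))]
          field_simp [ne_of_gt (hB z)]
  have fishid : ∑ z : ∀ j, Z j, ∑ x : Z i, Mi (z i) x * pz ζi z * φ z *
        (φ (update z i x) / φ z - 1 - Real.log (φ (update z i x) / φ z))
      = ∑ z : ∀ j, Z j, pz ζi z * (condE ζi i φ z * fisherInfo (ζi i) (ψ z) Mi) := by
    have h := FUB hζi i (fun z _ => ∑ x' : Z i, Mi (z i) x' * φ z *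
      (φ (update z i x') / φ z - 1 - Real.log (φ (update z i x') / φ z)))
    calc ∑ z : ∀ j, Z j, ∑ x : Z i, Mi (z i) x * pz ζi z * φ z *
          (φ (update z i x) / φ z - 1 - Real.log (φ (update z i x) / φ z))
        = ∑ z : ∀ j, Z j, ∑ x : Z i, pz ζi z * ζi i x * ((fun z (_ : Z i) =>
            ∑ x' : Z i, Mi (z i) x' * φ z * (φ (update z i x') / φ z - 1
              - Real.log (φ (update z i x') / φ z))) z x) := by
          apply Finset.sum_congr rfl; intro z _
          rw [show (∑ x : Z i, pz ζi z * ζi i x * ((fun z (_ : Z i) =>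
              ∑ x' : Z i, Mi (z i) x' * φ z * (φ (update z i x') / φ z - 1
                - Real.log (φ (update z i x') / φ z))) z x))
            = (∑ x : Z i, ζi i x) * (pz ζi z * ∑ x' : Z i, Mi (z i) x' * φ z *
              (φ (update z i x') / φ z - 1 - Real.log (φ (update z i x') / φ z))) from by
              rw [Finset.sum_mul]; apply Finset.sum_congr rfl; intro x _; ring]
          rw [(hζi i).2, one_mul, Finset.mul_sum]
          apply Finset.sum_congr rfl; intro x _; ring
      _ = ∑ z : ∀ j, Z j, ∑ x : Z i, pz ζi z * ζi i x * ((fun z (_ : Z i) =>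
            ∑ x' : Z i, Mi (z i) x' * φ z * (φ (update z i x') / φ z - 1
              - Real.log (φ (update z i x') / φ z))) (update z i x) (z i)) := h.symm
      _ = ∑ z : ∀ j, Z j, pz ζi z * (condE ζi i φ z * fisherInfo (ζi i) (ψ z) Mi) := by
          apply Finset.sum_congr rfl; intro z _
          simp only [update_self, Function.update_idem]
          unfold fisherInfo
          rw [Finset.mul_sum, Finset.mul_sum]
          apply Finset.sum_congr rfl; intro x _
          rw [Finset.mul_sum, Finset.mul_sum, Finset.mul_sum]
          apply Finset.sum_congr rfl; intro x' _
          rw [hratio z x x', hψ]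
          have hBne := ne_of_gt (hB z)
          field_simp [hBne, ne_of_gt (hφ (update z i x))]
  rw [entid, fishid, Finset.mul_sum]
  apply Finset.sum_le_sum
  intro z _
  have hkey := gLSI_mul_relEnt_le (hζi i) hMi (hψdens z)
  calc gLSI (ζi i) Mi * (pz ζi z * (condE ζi i φ z * relEnt (ζi i) (ψ z)))
      = (pz ζi z * condE ζi i φ z) * (gLSI (ζi i) Mi * relEnt (ζi i) (ψ z)) := by ring
    _ ≤ (pz ζi z * condE ζi i φ z) * fisherInfo (ζi i) (ψ z) Mi :=
        mul_le_mul_of_nonneg_left hkey (mul_pos (pz_pos hζi z) (hB z)).le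
    _ = pz ζi z * (condE ζi i φ z * fisherInfo (ζi i) (ψ z) Mi) := by ring

lemma cond_ent_nonneg (i : Fin d) {φ : (∀ j, Z j) → ℝ} (hφ : ∀ z, 0 < φ z) :
    0 ≤ ∑ z : ∀ j, Z j, pz ζi z * φ z *
        (Real.log (φ z) - Real.log (condE ζi i φ z)) := by
  have hB : ∀ z, 0 < condE ζi i φ z := condE_pos hζi i hφ
  set ψ : (∀ j, Z j) → Z i → ℝ := fun z x => φ (update z i x) / condE ζi i φ z with hψ
  have hψdens : ∀ z, IsDensity (ζi i) (ψ z) := by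
    intro z
    refine ⟨fun x => div_pos (hφ _) (hB z), ?_⟩
    unfold expec
    have hterm : ∀ x : Z i, ψ z x * ζi i x = (ζi i x * φ (update z i x)) / condE ζi i φ z := by
      intro x; rw [hψ]; ring
    rw [Finset.sum_congr rfl fun x _ => hterm x, ← Finset.sum_div]
    exact div_self (ne_of_gt (hB z))
  have entid : ∑ z : ∀ j, Z j, pz ζi z * φ z * (Real.log (φ z) - Real.log (condE ζi i φ z))
      = ∑ z : ∀ j, Z j, pz ζi z * (condE ζi i φ z * relEnt (ζi i) (ψ z)) := by
    have h := FUB hζi i (fun z _ => φ z * (Real.log (φ z) - Real.log (condE ζi i φ z)))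
    calc ∑ z : ∀ j, Z j, pz ζi z * φ z * (Real.log (φ z) - Real.log (condE ζi i φ z))
        = ∑ z : ∀ j, Z j, ∑ x : Z i, pz ζi z * ζi i x *
            (φ z * (Real.log (φ z) - Real.log (condE ζi i φ z))) := by
          apply Finset.sum_congr rfl; intro z _
          rw [show (∑ x : Z i, pz ζi z * ζi i x *
              (φ z * (Real.log (φ z) - Real.log (condE ζi i φ z))))
            = (∑ x : Z i, ζi i x) * (pz ζi z *
              (φ z * (Real.log (φ z) - Real.log (condE ζi i φ z)))) from by
              rw [Finset.sum_mul]; apply Finset.sum_congr rfl; intro x _; ring]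
          rw [(hζi i).2, one_mul]; ring
      _ = ∑ z : ∀ j, Z j, ∑ x : Z i, pz ζi z * ζi i x *
            (φ (update z i x) * (Real.log (φ (update z i x))
              - Real.log (condE ζi i φ (update z i x)))) := h.symm
      _ = ∑ z : ∀ j, Z j, pz ζi z * (condE ζi i φ z * relEnt (ζi i) (ψ z)) := by
          apply Finset.sum_congr rfl; intro z _
          unfold relEnt
          rw [Finset.mul_sum, Finset.mul_sum]
          apply Finset.sum_congr rfl; intro x _
          rw [condE_update hζi, hψ,
            Real.log_div (ne_of_gt (hφ _)) (ne_of_gt (hB z))]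
          field_simp [ne_of_gt (hB z)]
  rw [entid]
  apply Finset.sum_nonneg
  intro z _
  exact mul_nonneg (pz_pos hζi z).le
    (mul_nonneg (hB z).le (relEnt_nonneg (hζi i) (hψdens z)))

/-- summing a function of one coordinate -/
lemma sum_lift (i : Fin d) (g : Z i → ℝ) :
    ∑ z : ∀ j, Z j, pz ζi z * g (z i) = ∑ x : Z i, ζi i x * g x := by
  have h := FUB hζi i (fun _ x => g x)
  have h1 : ∑ z : ∀ j, Z j, ∑ x : Z i, pz ζi z * ζi i x * g (z i)
      = ∑ z : ∀ j, Z j, pz ζi z * g (z i) := by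
    apply Finset.sum_congr rfl; intro z _
    rw [show (∑ x : Z i, pz ζi z * ζi i x * g (z i))
      = (∑ x : Z i, ζi i x) * (pz ζi z * g (z i)) from by
        rw [Finset.sum_mul]; apply Finset.sum_congr rfl; intro x _; ring]
    rw [(hζi i).2, one_mul]
  have h2 : ∑ z : ∀ j, Z j, ∑ x : Z i, pz ζi z * ζi i x * g x
      = ∑ x : Z i, ζi i x * g x := by
    rw [Finset.sum_comm]
    apply Finset.sum_congr rfl; intro x _
    rw [show (∑ z : ∀ j, Z j, pz ζi z * ζi i x * g x)
      = (∑ z : ∀ j, Z j, pz ζi z) * (ζi i x * g x) from by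
        rw [Finset.sum_mul]; apply Finset.sum_congr rfl; intro z _; ring]
    rw [sum_pz hζi, one_mul]
  rw [← h1, h, h2]

lemma lift_dens (i : Fin d) {ψ : Z i → ℝ} (hψ : IsDensity (ζi i) ψ) :
    IsDensity (pz ζi) (fun z => ψ (z i)) := by
  refine ⟨fun z => hψ.1 (z i), ?_⟩
  unfold expec
  have h := sum_lift hζi i ψ
  calc ∑ z : ∀ j, Z j, ψ (z i) * pz ζi z = ∑ z : ∀ j, Z j, pz ζi z * ψ (z i) := by
        apply Finset.sum_congr rfl; intro z _; ring
    _ = ∑ x : Z i, ζi i x * ψ x := h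
    _ = expec (ζi i) ψ := by unfold expec; apply Finset.sum_congr rfl; intro x _; ring
    _ = 1 := hψ.2

lemma lift_relEnt (i : Fin d) (ψ : Z i → ℝ) :
    relEnt (pz ζi) (fun z => ψ (z i)) = relEnt (ζi i) ψ := by
  unfold relEnt
  have h := sum_lift hζi i (fun x => ψ x * Real.log (ψ x))
  calc ∑ z : ∀ j, Z j, ψ (z i) * Real.log (ψ (z i)) * pz ζi z
      = ∑ z : ∀ j, Z j, pz ζi z * (ψ (z i) * Real.log (ψ (z i))) := by
        apply Finset.sum_congr rfl; intro z _; ring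
    _ = ∑ x : Z i, ζi i x * (ψ x * Real.log (ψ x)) := h
    _ = ∑ x : Z i, ψ x * Real.log (ψ x) * ζi i x := by
        apply Finset.sum_congr rfl; intro x _; ring

lemma lift_fisher (i : Fin d) {ψ : Z i → ℝ} (hψ : ∀ x, 0 < ψ x)
    (Mi : ∀ j, Z j → Z j → ℝ) (M : (∀ j, Z j) → (∀ j, Z j) → ℝ)
    (hM : ∀ z z', M z z' = (1 / (d : ℝ)) * ∑ j,
      (if ∀ l, l ≠ j → z l = z' l then Mi j (z j) (z' j) else 0)) :
    fisherInfo (pz ζi) (fun z => ψ (z i)) M = (1 / (d : ℝ)) * fisherInfo (ζi i) ψ (Mi i) := by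
  rw [fisher_decomp hζi Mi M hM]
  congr 1
  rw [Finset.sum_eq_single_of_mem i (Finset.mem_univ i)]
  · show ∑ z : ∀ j, Z j, ∑ x : Z i, Mi i (z i) x * pz ζi z * ψ (z i) *
        (ψ (update z i x i) / ψ (z i) - 1 - Real.log (ψ (update z i x i) / ψ (z i)))
      = fisherInfo (ζi i) ψ (Mi i)
    have h := sum_lift hζi i (fun y => ∑ x : Z i, Mi i y x * ψ y *
      (ψ x / ψ y - 1 - Real.log (ψ x / ψ y)))
    calc ∑ z : ∀ j, Z j, ∑ x : Z i, Mi i (z i) x * pz ζi z * ψ (z i) *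
          (ψ (update z i x i) / ψ (z i) - 1 - Real.log (ψ (update z i x i) / ψ (z i)))
        = ∑ z : ∀ j, Z j, pz ζi z * ((fun y => ∑ x : Z i, Mi i y x * ψ y *
            (ψ x / ψ y - 1 - Real.log (ψ x / ψ y))) (z i)) := by
          apply Finset.sum_congr rfl; intro z _
          simp only [Function.update_self]
          rw [Finset.mul_sum]
          apply Finset.sum_congr rfl; intro x _; ring
      _ = ∑ x : Z i, ζi i x * ((fun y => ∑ x : Z i, Mi i y x * ψ y *
            (ψ x / ψ y - 1 - Real.log (ψ x / ψ y))) x) := h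
      _ = fisherInfo (ζi i) ψ (Mi i) := by
          unfold fisherInfo
          apply Finset.sum_congr rfl; intro y _
          simp only []
          rw [Finset.mul_sum]
          apply Finset.sum_congr rfl; intro x _; ring
  · intro b _ hb
    apply Finset.sum_eq_zero; intro z _
    apply Finset.sum_eq_zero; intro x _
    show Mi b (z b) x * pz ζi z * ψ (z i) *
        (ψ (update z b x i) / ψ (z i) - 1 - Real.log (ψ (update z b x i) / ψ (z i))) = 0
    rw [Function.update_of_ne (Ne.symm hb), div_self (ne_of_gt (hψ (z i))), Real.log_one]
    ring

end Product


open Pointwise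

/-- tensorisation of the generalised log-Sobolev constant. -/
theorem gLSI_tensorisation
    (d : ℕ) (hd : 1 ≤ d)
    (Z : Fin d → Type*) [∀ i, Fintype (Z i)] [∀ i, DecidableEq (Z i)]
    (hcard : ∀ i, 2 ≤ Fintype.card (Z i))
    (Mi : ∀ i, Z i → Z i → ℝ)
    (hgen : ∀ i, IsGenerator (Mi i)) (hirr : ∀ i, IsIrreducibleGen (Mi i))
    (ζi : ∀ i, Z i → ℝ) (hζi : ∀ i, IsPosProb (ζi i))
    (ζ : (∀ i, Z i) → ℝ) (hζ : ∀ z, ζ z = ∏ i, ζi i (z i))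
    (M : (∀ i, Z i) → (∀ i, Z i) → ℝ)
    (hM : ∀ z z', M z z' =
      (1 / (d : ℝ)) * ∑ i,
        (if ∀ j, j ≠ i → z j = z' j then Mi i (z i) (z' i) else 0)) :
    gLSI ζ M = (1 / (d : ℝ)) * sInf (Set.range fun i => gLSI (ζi i) (Mi i)) := by
  haveI : ∀ i, Nonempty (Z i) := fun i => Fintype.card_pos_iff.mp (by have := hcard i; omega)
  haveI : Nonempty (Fin d) := ⟨⟨0, hd⟩⟩
  have hζp : ζ = pz ζi := funext fun z => hζ z
  subst hζp
  have hpp : IsPosProb (pz ζi) := ⟨pz_pos hζi, sum_pz hζi⟩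
  have hMoff : ∀ z z' : (∀ i, Z i), z ≠ z' → 0 ≤ M z z' := by
    intro z z' hne
    rw [hM]
    apply mul_nonneg (by positivity)
    apply Finset.sum_nonneg
    intro i _
    split
    · rename_i hcond
      by_cases hzi : z i = z' i
      · exfalso
        apply hne
        funext j
        by_cases hj : j = i
        · subst hj; exact hzi
        · exact hcond j hj
      · exact (hgen i).1 _ _ hzi
    · exact le_refl 0
  have hlift_ne : ∀ (i : Fin d) (ψ : Z i → ℝ), ψ ≠ (fun _ => 1) →
      (fun z : ∀ j, Z j => ψ (z i)) ≠ (fun _ => 1) := by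
    intro i ψ hne hcontra
    obtain ⟨x0, hx0⟩ : ∃ x0, ψ x0 ≠ 1 := by
      by_contra hc; push_neg at hc; exact hne (funext hc)
    obtain ⟨z⟩ : Nonempty (∀ j, Z j) := ⟨fun j => Classical.arbitrary _⟩
    have h2 := congrFun hcontra (Function.update z i x0)
    simp only [Function.update_self] at h2
    exact hx0 h2
  set α := fun i => gLSI (ζi i) (Mi i) with hα
  obtain ⟨i₀, hi₀⟩ := Finite.exists_min α
  have hα0 : ∀ i, 0 ≤ α i := fun i => gLSI_nonneg (hζi i) ((hgen i).1)
  have hrange : sInf (Set.range α) = α i₀ :=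
    IsLeast.csInf_eq ⟨⟨i₀, rfl⟩, by rintro r ⟨j, rfl⟩; exact hi₀ j⟩
  rw [hrange]
  -- upper bound
  have hub : gLSI (pz ζi) M ≤ (1 / (d : ℝ)) * α i₀ := by
    have hsc : sInf ((1 / (d : ℝ)) • { r : ℝ | ∃ ψ : Z i₀ → ℝ, IsDensity (ζi i₀) ψ ∧
        ψ ≠ (fun _ => 1) ∧ r = fisherInfo (ζi i₀) ψ (Mi i₀) / relEnt (ζi i₀) ψ })
        = (1 / (d : ℝ)) * α i₀ := by
      rw [Real.sInf_smul_of_nonneg (by positivity), smul_eq_mul, hα]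
      rfl
    rw [← hsc]
    apply le_csInf
    · obtain ⟨ψ, h1, h2⟩ := exists_density (hζi i₀) (hcard i₀)
      exact Set.Nonempty.smul_set ⟨_, ψ, h1, h2, rfl⟩
    rintro b ⟨r, ⟨ψ, hdens, hne, rfl⟩, rfl⟩
    have hval : fisherInfo (pz ζi) (fun z => ψ (z i₀)) M
        / relEnt (pz ζi) (fun z => ψ (z i₀))
        = (1 / (d : ℝ)) • (fisherInfo (ζi i₀) ψ (Mi i₀) / relEnt (ζi i₀) ψ) := by
      rw [lift_fisher hζi i₀ hdens.1 Mi M hM, lift_relEnt hζi i₀ ψ, smul_eq_mul,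
        mul_div_assoc]
    show gLSI (pz ζi) M ≤ (1 / (d : ℝ)) • (fisherInfo (ζi i₀) ψ (Mi i₀) / relEnt (ζi i₀) ψ)
    rw [← hval]
    apply csInf_le ⟨0, fun r hr => gLSI_ratio_mem_nonneg hpp hMoff r hr⟩
    exact ⟨_, lift_dens hζi i₀ hdens, hlift_ne i₀ ψ hne, rfl⟩
  -- lower bound
  have hlb : (1 / (d : ℝ)) * α i₀ ≤ gLSI (pz ζi) M := by
    apply le_csInf
    · obtain ⟨ψ, h1, h2⟩ := exists_density (hζi i₀) (hcard i₀)
      exact ⟨_, (fun z => ψ (z i₀)), lift_dens hζi i₀ h1, hlift_ne i₀ ψ h2, rfl⟩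
    rintro r ⟨φ, hdens, hne, rfl⟩
    have hφ := hdens.1
    have hH : 0 < relEnt (pz ζi) φ := relEnt_pos hpp hdens hne
    rw [le_div_iff₀ hH]
    have hrel : relEnt (pz ζi) φ = ∑ z : ∀ j, Z j, pz ζi z * φ z * Real.log (φ z) := by
      unfold relEnt; apply Finset.sum_congr rfl; intro z _; ring
    have hexp1 : ∑ z : ∀ j, Z j, pz ζi z * φ z = 1 := by
      rw [← hdens.2]; unfold expec; apply Finset.sum_congr rfl; intro z _; ring
    have hsub := entropy_subadd hζi hφ hexp1
    have hD0 : ∀ i : Fin d, 0 ≤ ∑ z : ∀ j, Z j, pz ζi z * φ z *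
        (Real.log (φ z) - Real.log (condE ζi i φ z)) := fun i => cond_ent_nonneg hζi i hφ
    have hchain : ∀ i : Fin d, α i * ∑ z : ∀ j, Z j, pz ζi z * φ z *
          (Real.log (φ z) - Real.log (condE ζi i φ z))
        ≤ ∑ z : ∀ j, Z j, ∑ x : Z i, Mi i (z i) x * pz ζi z * φ z *
          (φ (Function.update z i x) / φ z - 1
            - Real.log (φ (Function.update z i x) / φ z)) :=
      fun i => coord_bound hζi i (Mi i) ((hgen i).1) hφ
    calc 1 / (d : ℝ) * α i₀ * relEnt (pz ζi) φ
        = (1 / (d : ℝ)) * (α i₀ * ∑ z : ∀ j, Z j, pz ζi z * φ z * Real.log (φ z)) := by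
          rw [hrel]; ring
      _ ≤ (1 / (d : ℝ)) * (α i₀ * ∑ i : Fin d, ∑ z : ∀ j, Z j, pz ζi z * φ z *
            (Real.log (φ z) - Real.log (condE ζi i φ z))) := by
          apply mul_le_mul_of_nonneg_left
            (mul_le_mul_of_nonneg_left hsub (hα0 i₀)) (by positivity)
      _ = (1 / (d : ℝ)) * ∑ i : Fin d, α i₀ * ∑ z : ∀ j, Z j, pz ζi z * φ z *
            (Real.log (φ z) - Real.log (condE ζi i φ z)) := by
          rw [Finset.mul_sum]
      _ ≤ (1 / (d : ℝ)) * ∑ i : Fin d, α i * ∑ z : ∀ j, Z j, pz ζi z * φ z *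
            (Real.log (φ z) - Real.log (condE ζi i φ z)) := by
          apply mul_le_mul_of_nonneg_left
            (Finset.sum_le_sum fun i _ => mul_le_mul_of_nonneg_right (hi₀ i) (hD0 i))
            (by positivity)
      _ ≤ (1 / (d : ℝ)) * ∑ i : Fin d, ∑ z : ∀ j, Z j, ∑ x : Z i,
            Mi i (z i) x * pz ζi z * φ z *
              (φ (Function.update z i x) / φ z - 1
                - Real.log (φ (Function.update z i x) / φ z)) := by
          apply mul_le_mul_of_nonneg_left
            (Finset.sum_le_sum fun i _ => hchain i) (by positivity)
      _ = fisherInfo (pz ζi) φ M := (fisher_decomp hζi Mi M hM).symm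
  exact le_antisymm hub hlb
end

section
/- Let M be an irreducible generator on a finite set Z with |Z| ≥ 2 and let ζ ∈ P_+(Z). Let ζ_* = min_z ζ(z) and let M_* = min { M(z,z') : z ≠ z', M(z,z') > 0 } be the smallest positive off-diagonal rate of M. Then the generalised Poincaré constant satisfies α_gPI(ζ,M) ≥ ζ_* · M_* / |Z|. -/
open Finset Filter

/-- The minimal value of `ζ`. -/
noncomputable def minVal {Z : Type*} (ζ : Z → ℝ) : ℝ := sInf (Set.range ζ)

/-- The smallest positive off-diagonal rate of `M`. -/
noncomputable def minPosRate {Z : Type*} (M : Z → Z → ℝ) : ℝ :=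
  sInf { x : ℝ | ∃ z z' : Z, z ≠ z' ∧ 0 < M z z' ∧ x = M z z' }


lemma exists_inj_path {Z : Type*} (M : Z → Z → ℝ) {z z' : Z} (hne : z ≠ z') :
    ∀ (ℓ : ℕ) (p : ℕ → Z), 1 ≤ ℓ → p 0 = z → p ℓ = z' →
      (∀ i : ℕ, 1 ≤ i → i ≤ ℓ → 0 < M (p (i - 1)) (p i)) →
    ∃ (m : ℕ) (q : ℕ → Z), 1 ≤ m ∧ q 0 = z ∧ q m = z' ∧
      (∀ i, i < m → 0 < M (q i) (q (i + 1))) ∧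
      (∀ i j, i ≤ m → j ≤ m → q i = q j → i = j) := by
  intro ℓ
  induction ℓ using Nat.strong_induction_on with
  | _ ℓ ih =>
    intro p hℓ h0 hend hpos
    by_cases hinj : ∀ i j, i ≤ ℓ → j ≤ ℓ → p i = p j → i = j
    · refine ⟨ℓ, p, hℓ, h0, hend, ?_, hinj⟩
      intro i hi
      have := hpos (i + 1) (by omega) (by omega)
      simpa using this
    · push_neg at hinj
      obtain ⟨i, j, hi, hj, hpij, hij⟩ := hinj
      obtain ⟨a, b, ha, hb, hab, hpab⟩ : ∃ a b, a ≤ ℓ ∧ b ≤ ℓ ∧ a < b ∧ p a = p b := by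
        rcases lt_or_gt_of_ne hij with h | h
        · exact ⟨i, j, hi, hj, h, hpij⟩
        · exact ⟨j, i, hj, hi, h, hpij.symm⟩
      set d := b - a with hd
      have hd1 : 1 ≤ d := by omega
      set m := ℓ - d with hm
      have hmlt : m < ℓ := by omega
      set q : ℕ → Z := fun k => if k ≤ a then p k else p (k + d) with hq
      have hm1 : 1 ≤ m := by
        by_contra h
        have hm0 : m = 0 := by omega
        have ha0 : a = 0 := by omega
        have hbℓ : b = ℓ := by omega
        exact hne (by rw [← h0, ← hend, ← hbℓ, ← hpab, ha0])
      have hq0 : q 0 = z := by simp [hq, h0]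
      have hqm : q m = z' := by
        by_cases h : m ≤ a
        · have : m = a := by omega
          have : b = ℓ := by omega
          simp only [hq, if_pos h]
          rw [show m = a by omega, hpab, this, hend]
        · simp only [hq, if_neg h]
          rw [show m + d = ℓ by omega, hend]
      refine ih m hmlt q hm1 hq0 hqm ?_
      intro k hk1 hkm
      by_cases hka : k ≤ a
      · have h1 : q (k - 1) = p (k - 1) := by
          simp only [hq]; rw [if_pos (show k - 1 ≤ a by omega)]
        have h2 : q k = p k := by simp only [hq]; rw [if_pos hka]
        rw [h1, h2]; exact hpos k hk1 (by omega)
      · by_cases hka' : k = a + 1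
        · have h1 : q (k - 1) = p b := by
            simp only [hq]
            rw [if_pos (by omega : k - 1 ≤ a), show k - 1 = a by omega, hpab]
          have h2 : q k = p (b + 1) := by
            simp only [hq, if_neg hka]
            congr 1; omega
          rw [h1, h2]
          have := hpos (b + 1) (by omega) (by omega)
          simpa using this
        · have h1 : q (k - 1) = p (k - 1 + d) := by
            simp only [hq]; rw [if_neg (by omega)]
          have h2 : q k = p (k + d) := by simp only [hq]; rw [if_neg hka]
          rw [h1, h2]
          have := hpos (k + d) (by omega) (by omega)
          have e : k + d - 1 = k - 1 + d := by omega
          rwa [e] at this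

lemma double_sum_var {Z : Type*} [Fintype Z] (ζ f : Z → ℝ) (h1 : ∑ z : Z, ζ z = 1) :
    ∑ z : Z, ∑ z' : Z, ζ z * ζ z' * (f z - f z') ^ 2 = 2 * varWrt ζ f := by
  have h : ∀ z z' : Z, ζ z * ζ z' * (f z - f z') ^ 2
      = f z ^ 2 * ζ z * ζ z' - 2 * ((f z * ζ z) * (f z' * ζ z')) + ζ z * (f z' ^ 2 * ζ z') := by
    intros; ring
  simp_rw [h, Finset.sum_add_distrib, Finset.sum_sub_distrib, ← Finset.mul_sum,
    ← Finset.sum_mul, h1]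
  unfold varWrt expec
  ring

/-- explicit lower bound for the generalised Poincaré constant. -/
theorem gPI_lower_bound
    {Z : Type*} [Fintype Z] (hcard : 2 ≤ Fintype.card Z)
    (M : Z → Z → ℝ) (hgen : IsGenerator M) (hirr : IsIrreducibleGen M)
    (ζ : Z → ℝ) (hζ : IsPosProb ζ) :
    minVal ζ * minPosRate M / (Fintype.card Z : ℝ) ≤ gPI ζ M := by
  classical
  obtain ⟨hζpos, hζ1⟩ := hζ
  have hncard : (0:ℝ) < (Fintype.card Z : ℝ) := by
    have : 0 < Fintype.card Z := by omega
    exact_mod_cast this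
  -- facts about minVal
  have hrfin : (Set.range ζ).Finite := Set.finite_range ζ
  have hZne : Nonempty Z := Fintype.card_pos_iff.mp (by omega)
  have hrne : (Set.range ζ).Nonempty := Set.range_nonempty ζ
  obtain ⟨z₀, hz₀⟩ := hrne.csInf_mem hrfin
  have hminpos : 0 < minVal ζ := by rw [minVal, ← hz₀]; exact hζpos z₀
  have hminle : ∀ z, minVal ζ ≤ ζ z := fun z => csInf_le hrfin.bddBelow ⟨z, rfl⟩
  -- facts about minPosRate
  have hdiag : ∀ z : Z, M z z ≤ 0 := by
    intro z
    have hrow := hgen.2 z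
    rw [← Finset.add_sum_erase Finset.univ _ (Finset.mem_univ z)] at hrow
    have hnn : 0 ≤ ∑ z' ∈ Finset.univ.erase z, M z z' := by
      refine Finset.sum_nonneg fun z' hz' => hgen.1 z z' ?_
      exact fun h => (Finset.mem_erase.mp hz').1 h.symm
    linarith
  obtain ⟨a, b, hab⟩ := Fintype.exists_pair_of_one_lt_card (α := Z) (by omega)
  have hTfin : { x : ℝ | ∃ z z' : Z, z ≠ z' ∧ 0 < M z z' ∧ x = M z z' }.Finite := by
    refine Set.Finite.subset (Set.finite_range (fun pr : Z × Z => M pr.1 pr.2)) ?_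
    rintro x ⟨u, v, -, -, rfl⟩; exact ⟨(u, v), rfl⟩
  have hTne : { x : ℝ | ∃ z z' : Z, z ≠ z' ∧ 0 < M z z' ∧ x = M z z' }.Nonempty := by
    obtain ⟨ℓ, p, hℓ, h0, hend, hpos⟩ := hirr a b hab
    have h01 : 0 < M (p 0) (p 1) := by simpa using hpos 1 le_rfl hℓ
    have hne01 : p 0 ≠ p 1 := by
      intro h; rw [h] at h01; exact absurd h01 (not_lt.mpr (hdiag (p 1)))
    exact ⟨M (p 0) (p 1), p 0, p 1, hne01, h01, rfl⟩
  obtain ⟨u₀, v₀, huv₀, hMuv₀, hMeq₀⟩ := hTne.csInf_mem hTfin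
  have hMpos : 0 < minPosRate M := by rw [minPosRate, hMeq₀]; exact hMuv₀
  have hMle : ∀ u v : Z, u ≠ v → 0 < M u v → minPosRate M ≤ M u v :=
    fun u v h h' => csInf_le hTfin.bddBelow ⟨u, v, h, h', rfl⟩
  -- nonemptiness of the gPI set
  have hfab : Nonconst (fun z : Z => if z = a then (1:ℝ) else 0) :=
    ⟨a, b, by simp [hab, (show b ≠ a from fun h => hab h.symm)]⟩
  refine le_csInf ⟨_, _, hfab, rfl⟩ ?_
  rintro r ⟨f, hf, rfl⟩
  -- choose the maximizing pair
  obtain ⟨⟨z₁, z₂⟩, -, hmax⟩ :=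
    Finset.exists_max_image (Finset.univ : Finset (Z × Z))
      (fun pr => (f pr.1 - f pr.2) ^ 2) ⟨(a, b), Finset.mem_univ _⟩
  set D := (f z₁ - f z₂) ^ 2 with hD
  have hDle : ∀ u v : Z, (f u - f v) ^ 2 ≤ D := fun u v => hmax (u, v) (Finset.mem_univ _)
  obtain ⟨u, v, huv⟩ := hf
  have hDpos : 0 < D := by
    have h1 : (0:ℝ) < (f u - f v) ^ 2 := by
      have : f u - f v ≠ 0 := sub_ne_zero.mpr huv
      positivity
    exact lt_of_lt_of_le h1 (hDle u v)
  have hz12 : z₁ ≠ z₂ := by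
    intro h; rw [h] at hD; simp [hD] at hDpos
  -- variance bounds
  have hvarle : 2 * varWrt ζ f ≤ D := by
    rw [← double_sum_var ζ f hζ1]
    have hptw : ∀ z z' : Z, ζ z * ζ z' * D = (ζ z * D) * ζ z' := fun z z' => by ring
    calc ∑ z : Z, ∑ z' : Z, ζ z * ζ z' * (f z - f z') ^ 2
        ≤ ∑ z : Z, ∑ z' : Z, ζ z * ζ z' * D := by
          refine Finset.sum_le_sum fun z _ => Finset.sum_le_sum fun z' _ => ?_
          exact mul_le_mul_of_nonneg_left (hDle z z')
            (mul_nonneg (hζpos z).le (hζpos z').le)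
      _ = D := by
          simp_rw [hptw, ← Finset.mul_sum, hζ1, mul_one, ← Finset.sum_mul, hζ1, one_mul]
  have hvarpos : 0 < varWrt ζ f := by
    have h2 : 0 < 2 * varWrt ζ f := by
      rw [← double_sum_var ζ f hζ1]
      refine Finset.sum_pos' (fun z _ => Finset.sum_nonneg fun z' _ => ?_) ?_
      · exact mul_nonneg (mul_nonneg (hζpos z).le (hζpos z').le) (sq_nonneg _)
      · refine ⟨u, Finset.mem_univ u, Finset.sum_pos'
          (fun z' _ => mul_nonneg (mul_nonneg (hζpos u).le (hζpos z').le) (sq_nonneg _))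
          ⟨v, Finset.mem_univ v, ?_⟩⟩
        have h3 : f u - f v ≠ 0 := sub_ne_zero.mpr huv
        have h4 : (0:ℝ) < (f u - f v) ^ 2 := by positivity
        exact mul_pos (mul_pos (hζpos u) (hζpos v)) h4
    linarith
  -- the path
  obtain ⟨ℓ, p, hℓ, h0, hend, hpos⟩ := hirr z₁ z₂ hz12
  obtain ⟨m, q, hm1, hq0, hqm, hqpos, hqinj⟩ := exists_inj_path M hz12 ℓ p hℓ h0 hend hpos
  have hmcard : m < Fintype.card Z := by
    have hinjf : Function.Injective (fun i : Fin (m + 1) => q i) := by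
      intro ⟨i, hi⟩ ⟨j, hj⟩ h
      have := hqinj i j (by omega) (by omega) h
      exact Fin.ext this
    have := Fintype.card_le_of_injective _ hinjf
    simpa using this
  have hmR : (m : ℝ) ≤ (Fintype.card Z : ℝ) := by exact_mod_cast hmcard.le
  have hmRpos : (0:ℝ) < (m : ℝ) := by exact_mod_cast hm1
  -- Dirichlet form lower bound
  set t : Z → Z → ℝ := fun w w' => M w w' * ζ w * (f w - f w') ^ 2 with ht
  have htnn : ∀ w w' : Z, 0 ≤ t w w' := by
    intro w w'
    by_cases h : w = w'
    · simp [ht, h]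
    · exact mul_nonneg (mul_nonneg (hgen.1 w w' h) (hζpos w).le) (sq_nonneg _)
  set dsum := ∑ i ∈ Finset.range m, (f (q (i + 1)) - f (q i)) ^ 2 with hds
  have hdsnn : 0 ≤ dsum := Finset.sum_nonneg fun i _ => sq_nonneg _
  have hedge : ∀ i ∈ Finset.range m,
      minVal ζ * minPosRate M * (f (q (i + 1)) - f (q i)) ^ 2 ≤ t (q i) (q (i + 1)) := by
    intro i hi
    rw [Finset.mem_range] at hi
    have hne : q i ≠ q (i + 1) := by
      intro h
      have := hqinj i (i + 1) (by omega) (by omega) h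
      omega
    have h1 : minPosRate M ≤ M (q i) (q (i + 1)) := hMle _ _ hne (hqpos i hi)
    have h2 : minVal ζ ≤ ζ (q i) := hminle _
    have h3 := sq_nonneg (f (q (i + 1)) - f (q i))
    have h4 : (f (q (i+1)) - f (q i)) ^ 2 = (f (q i) - f (q (i+1))) ^ 2 := by ring
    have hA : minVal ζ * minPosRate M ≤ M (q i) (q (i + 1)) * ζ (q i) := by
      rw [mul_comm (minVal ζ)]
      exact mul_le_mul h1 h2 hminpos.le ((hMpos.trans_le h1).le)
    rw [ht]
    simp only
    rw [← h4]
    exact mul_le_mul_of_nonneg_right hA h3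
  have hEdge_sum : minVal ζ * minPosRate M * dsum
      ≤ ∑ i ∈ Finset.range m, t (q i) (q (i + 1)) := by
    rw [hds, Finset.mul_sum]
    exact Finset.sum_le_sum hedge
  have hsum_le_total : ∑ i ∈ Finset.range m, t (q i) (q (i + 1))
      ≤ ∑ z : Z, ∑ z' : Z, t z z' := by
    have hinj' : ∀ x ∈ Finset.range m, ∀ y ∈ Finset.range m,
        (fun i => (q i, q (i + 1))) x = (fun i => (q i, q (i + 1))) y → x = y := by
      intro x hx y hy h
      rw [Finset.mem_range] at hx hy
      simp only [Prod.mk.injEq] at h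
      exact hqinj x y (by omega) (by omega) h.1
    have e1 : ∑ i ∈ Finset.range m, t (q i) (q (i + 1))
        = ∑ pr ∈ (Finset.range m).image (fun i => (q i, q (i + 1))), t pr.1 pr.2 := by
      rw [Finset.sum_image hinj']
    rw [e1, ← Finset.sum_product']
    refine Finset.sum_le_sum_of_subset_of_nonneg ?_ (fun pr _ _ => htnn _ _)
    intro x _
    simp [Finset.mem_product]
  have hCS : D ≤ (m : ℝ) * dsum := by
    have htel : ∑ i ∈ Finset.range m, (f (q (i + 1)) - f (q i)) = f z₂ - f z₁ := by
      rw [Finset.sum_range_sub (fun i => f (q i))]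
      rw [hqm, hq0]
    have hcs := Finset.sum_mul_sq_le_sq_mul_sq (Finset.range m)
      (fun _ => (1:ℝ)) (fun i => f (q (i + 1)) - f (q i))
    simp only [one_pow, one_mul, Finset.sum_const, Finset.card_range, nsmul_eq_mul, mul_one] at hcs
    rw [htel] at hcs
    calc D = (f z₂ - f z₁) ^ 2 := by rw [hD]; ring
      _ ≤ (m : ℝ) * dsum := by rw [hds]; exact hcs
  have hE : (1 / 2) * (minVal ζ * minPosRate M * dsum) ≤ dirichletForm ζ f M := by
    rw [dirichletForm]
    have := hEdge_sum.trans hsum_le_total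
    linarith
  -- combine
  rw [div_le_div_iff₀ hncard hvarpos]
  have hc : 0 < minVal ζ * minPosRate M := mul_pos hminpos hMpos
  have step1 : minVal ζ * minPosRate M * varWrt ζ f
      ≤ minVal ζ * minPosRate M * (D / 2) := by
    apply mul_le_mul_of_nonneg_left _ hc.le
    linarith
  have step2 : minVal ζ * minPosRate M * (D / 2)
      ≤ minVal ζ * minPosRate M * ((m : ℝ) * dsum / 2) := by
    apply mul_le_mul_of_nonneg_left _ hc.le
    linarith
  have step3 : minVal ζ * minPosRate M * ((m : ℝ) * dsum / 2)
      ≤ (Fintype.card Z : ℝ) * ((1 / 2) * (minVal ζ * minPosRate M * dsum)) := by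
    have h5 : 0 ≤ minVal ζ * minPosRate M * dsum := mul_nonneg hc.le hdsnn
    nlinarith
  have step4 : (Fintype.card Z : ℝ) * ((1 / 2) * (minVal ζ * minPosRate M * dsum))
      ≤ (Fintype.card Z : ℝ) * dirichletForm ζ f M :=
    mul_le_mul_of_nonneg_left hE hncard.le
  calc minVal ζ * minPosRate M * varWrt ζ f
      ≤ minVal ζ * minPosRate M * (D / 2) := step1
    _ ≤ minVal ζ * minPosRate M * ((m : ℝ) * dsum / 2) := step2
    _ ≤ (Fintype.card Z : ℝ) * ((1 / 2) * (minVal ζ * minPosRate M * dsum)) := step3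
    _ ≤ (Fintype.card Z : ℝ) * dirichletForm ζ f M := step4
    _ = dirichletForm ζ f M * (Fintype.card Z : ℝ) := by ring
end

section
/- Let M be a generator on a finite set Z with |Z| ≥ 2, let t₀ ∈ ℝ, and let μ, ζ : ℝ → (Z → ℝ) be such that for every z ∈ Z the map t ↦ μ_t(z) has derivative Σ_{z'∈Z} M(z',z) μ_{t₀}(z') at t₀ and the map t ↦ ζ_t(z) has derivative Σ_{z'∈Z} M(z',z) ζ_{t₀}(z') at t₀ (i.e. μ and ζ satisfy the forward Kolmogorov equation μ' = Mᵀμ, ζ' = Mᵀζ at t₀), and assume μ_{t₀}, ζ_{t₀} ∈ P_+(Z). Then the function t ↦ var_{ζ_t}(μ_t/ζ_t) has derivative −2 ℰ_{ζ_{t₀}}(μ_{t₀}/ζ_{t₀}, M) at t₀, and the function t ↦ H_{ζ_t}(μ_t/ζ_t) has derivative −ℛ_{ζ_{t₀}}(μ_{t₀}/ζ_{t₀}, M) at t₀ (here μ_t/ζ_t denotes the pointwise quotient). -/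
open Finset Filter

/-- along solutions of the forward Kolmogorov equation, the
generalised Dirichlet form and Fisher information are the dissipations of the
non-equilibrium variance and relative entropy. -/
theorem variance_and_entropy_dissipation
    {Z : Type*} [Fintype Z] (hcard : 2 ≤ Fintype.card Z)
    (M : Z → Z → ℝ) (hgen : IsGenerator M) (t₀ : ℝ)
    (μ ζ : ℝ → Z → ℝ)
    (hμ : ∀ z : Z, HasDerivAt (fun t => μ t z) (∑ z' : Z, M z' z * μ t₀ z') t₀)
    (hζ : ∀ z : Z, HasDerivAt (fun t => ζ t z) (∑ z' : Z, M z' z * ζ t₀ z') t₀)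
    (hμpos : IsPosProb (μ t₀)) (hζpos : IsPosProb (ζ t₀)) :
    HasDerivAt (fun t => varWrt (ζ t) (fun z => μ t z / ζ t z))
        (-2 * dirichletForm (ζ t₀) (fun z => μ t₀ z / ζ t₀ z) M) t₀ ∧
      HasDerivAt (fun t => relEnt (ζ t) (fun z => μ t z / ζ t z))
        (-fisherInfo (ζ t₀) (fun z => μ t₀ z / ζ t₀ z) M) t₀ := by
  obtain ⟨hMnn, hMrow⟩ := hgen
  obtain ⟨hμp, hμs⟩ := hμpos
  obtain ⟨hζp, hζs⟩ := hζpos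
  have hζne : ∀ z, ζ t₀ z ≠ 0 := fun z => (hζp z).ne'
  have hφpos : ∀ z, 0 < μ t₀ z / ζ t₀ z := fun z => div_pos (hμp z) (hζp z)
  have hφne : ∀ z, μ t₀ z / ζ t₀ z ≠ 0 := fun z => (hφpos z).ne'
  have hμφ : ∀ z, μ t₀ z = (μ t₀ z / ζ t₀ z) * ζ t₀ z :=
    fun z => (div_mul_cancel₀ _ (hζne z)).symm
  -- row sums vanish
  have key : ∀ c : Z → ℝ, ∑ z : Z, ∑ z' : Z, M z z' * c z = 0 := by
    intro c
    have h1 : ∀ z ∈ Finset.univ (α := Z), ∑ z' : Z, M z z' * c z = 0 := by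
      intro z _
      rw [← Finset.sum_mul, hMrow, zero_mul]
    rw [Finset.sum_congr rfl h1, Finset.sum_const_zero]
  have hsum0 : ∀ g : Z → ℝ, (∑ z : Z, ∑ z' : Z, M z' z * g z') = 0 := by
    intro g
    rw [Finset.sum_comm]
    exact key g
  have split : ∀ F G : Z → Z → ℝ, ∑ a : Z, ∑ b : Z, (-(F a b) + G a b)
      = -(∑ a : Z, ∑ b : Z, F a b) + ∑ a : Z, ∑ b : Z, G a b := by
    intro F G
    simp [Finset.sum_add_distrib, Finset.sum_neg_distrib]
  constructor
  · -- variance part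
    have hA : HasDerivAt (fun t => ∑ z : Z, (μ t z / ζ t z) ^ 2 * ζ t z)
        (∑ z : Z, (2 * (μ t₀ z / ζ t₀ z) * (∑ z' : Z, M z' z * μ t₀ z')
          - (μ t₀ z / ζ t₀ z) ^ 2 * (∑ z' : Z, M z' z * ζ t₀ z'))) t₀ := by
      apply HasDerivAt.fun_sum
      intro z _
      have h := (((hμ z).fun_div (hζ z) (hζne z)).fun_pow 2).fun_mul (hζ z)
      refine h.congr_deriv ?_
      norm_num
      field_simp [hζne z, (hμp z).ne']
      ring
    have hB : HasDerivAt (fun t => ∑ z : Z, (μ t z / ζ t z) * ζ t z)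
        (∑ z : Z, (∑ z' : Z, M z' z * μ t₀ z')) t₀ := by
      apply HasDerivAt.fun_sum
      intro z _
      have h := ((hμ z).fun_div (hζ z) (hζne z)).fun_mul (hζ z)
      refine h.congr_deriv ?_
      field_simp [hζne z, (hμp z).ne']
      ring
    have hone : ∑ z : Z, (μ t₀ z / ζ t₀ z) * ζ t₀ z = 1 := by
      rw [← hμs]
      exact Finset.sum_congr rfl fun z _ => (hμφ z).symm
    have hB2 : HasDerivAt (fun t => (∑ z : Z, (μ t z / ζ t z) * ζ t z) ^ 2)
        (0 : ℝ) t₀ := by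
      have h := hB.fun_pow 2
      refine h.congr_deriv ?_
      rw [hone, hsum0 (μ t₀)]
      norm_num
    have hmain : HasDerivAt (fun t =>
        (∑ z : Z, (μ t z / ζ t z) ^ 2 * ζ t z) - (∑ z : Z, (μ t z / ζ t z) * ζ t z) ^ 2)
        ((∑ z : Z, (2 * (μ t₀ z / ζ t₀ z) * (∑ z' : Z, M z' z * μ t₀ z')
          - (μ t₀ z / ζ t₀ z) ^ 2 * (∑ z' : Z, M z' z * ζ t₀ z'))) - 0) t₀ := hA.sub hB2
    have hfun : (fun t => varWrt (ζ t) (fun z => μ t z / ζ t z)) = (fun t =>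
        (∑ z : Z, (μ t z / ζ t z) ^ 2 * ζ t z) - (∑ z : Z, (μ t z / ζ t z) * ζ t z) ^ 2) := by
      funext t
      simp [varWrt, expec]
    rw [hfun]
    convert hmain using 1
    rw [sub_zero]
    symm
    -- scalar identity
    have expand : ∀ z : Z, 2 * (μ t₀ z / ζ t₀ z) * (∑ z' : Z, M z' z * μ t₀ z')
          - (μ t₀ z / ζ t₀ z) ^ 2 * (∑ z' : Z, M z' z * ζ t₀ z')
        = ∑ z' : Z, M z' z * (2 * (μ t₀ z / ζ t₀ z) * μ t₀ z'
            - (μ t₀ z / ζ t₀ z) ^ 2 * ζ t₀ z') := by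
      intro z
      rw [Finset.mul_sum, Finset.mul_sum, ← Finset.sum_sub_distrib]
      exact Finset.sum_congr rfl fun z' _ => by ring
    rw [show (∑ z : Z, (2 * (μ t₀ z / ζ t₀ z) * (∑ z' : Z, M z' z * μ t₀ z')
          - (μ t₀ z / ζ t₀ z) ^ 2 * (∑ z' : Z, M z' z * ζ t₀ z')))
        = ∑ z : Z, ∑ z' : Z, M z' z * (2 * (μ t₀ z / ζ t₀ z) * μ t₀ z'
            - (μ t₀ z / ζ t₀ z) ^ 2 * ζ t₀ z') from
      Finset.sum_congr rfl fun z _ => expand z]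
    rw [Finset.sum_comm]
    have step : ∀ a b : Z, M a b * (2 * (μ t₀ b / ζ t₀ b) * μ t₀ a
            - (μ t₀ b / ζ t₀ b) ^ 2 * ζ t₀ a)
        = -(M a b * ζ t₀ a * ((μ t₀ a / ζ t₀ a) - (μ t₀ b / ζ t₀ b)) ^ 2)
          + M a b * (ζ t₀ a * (μ t₀ a / ζ t₀ a) ^ 2) := by
      intro a b
      field_simp [hζne a, hζne b]
      ring
    calc ∑ a : Z, ∑ b : Z, M a b * (2 * (μ t₀ b / ζ t₀ b) * μ t₀ a
            - (μ t₀ b / ζ t₀ b) ^ 2 * ζ t₀ a)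
        = ∑ a : Z, ∑ b : Z, (-(M a b * ζ t₀ a * ((μ t₀ a / ζ t₀ a) - (μ t₀ b / ζ t₀ b)) ^ 2)
            + M a b * (ζ t₀ a * (μ t₀ a / ζ t₀ a) ^ 2)) := by
          exact Finset.sum_congr rfl fun a _ => Finset.sum_congr rfl fun b _ => step a b
      _ = -(∑ a : Z, ∑ b : Z, M a b * ζ t₀ a * ((μ t₀ a / ζ t₀ a) - (μ t₀ b / ζ t₀ b)) ^ 2)
            + ∑ a : Z, ∑ b : Z, M a b * (ζ t₀ a * (μ t₀ a / ζ t₀ a) ^ 2) := by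
          exact split _ _
      _ = -2 * dirichletForm (ζ t₀) (fun z => μ t₀ z / ζ t₀ z) M := by
          rw [key (fun a => ζ t₀ a * (μ t₀ a / ζ t₀ a) ^ 2), add_zero, dirichletForm]
          ring
  · -- entropy part
    have hA : HasDerivAt (fun t => ∑ z : Z, (μ t z / ζ t z) * Real.log (μ t z / ζ t z) * ζ t z)
        (∑ z : Z, ((∑ z' : Z, M z' z * μ t₀ z') * Real.log (μ t₀ z / ζ t₀ z)
          + (∑ z' : Z, M z' z * μ t₀ z')
          - (μ t₀ z / ζ t₀ z) * (∑ z' : Z, M z' z * ζ t₀ z'))) t₀ := by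
      apply HasDerivAt.fun_sum
      intro z _
      have hq := (hμ z).fun_div (hζ z) (hζne z)
      have h := (hq.fun_mul (hq.log (hφne z))).fun_mul (hζ z)
      have hc : ∀ x y : ℝ, y ≠ 0 → y * (x / y) = x := fun x y hy => by
        field_simp
      rw [hc _ _ (hφne z)] at h
      refine h.congr_deriv ?_
      field_simp [hζne z]
      ring
    have hfun : (fun t => relEnt (ζ t) (fun z => μ t z / ζ t z)) = (fun t =>
        ∑ z : Z, (μ t z / ζ t z) * Real.log (μ t z / ζ t z) * ζ t z) := by
      funext t
      simp [relEnt]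
    rw [hfun]
    convert hA using 1
    symm
    have expand : ∀ z : Z, (∑ z' : Z, M z' z * μ t₀ z') * Real.log (μ t₀ z / ζ t₀ z)
          + (∑ z' : Z, M z' z * μ t₀ z')
          - (μ t₀ z / ζ t₀ z) * (∑ z' : Z, M z' z * ζ t₀ z')
        = ∑ z' : Z, M z' z * (μ t₀ z' * Real.log (μ t₀ z / ζ t₀ z)
            + μ t₀ z' - (μ t₀ z / ζ t₀ z) * ζ t₀ z') := by
      intro z
      rw [Finset.sum_mul, Finset.mul_sum, ← Finset.sum_add_distrib, ← Finset.sum_sub_distrib]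
      exact Finset.sum_congr rfl fun z' _ => by ring
    rw [show (∑ z : Z, ((∑ z' : Z, M z' z * μ t₀ z') * Real.log (μ t₀ z / ζ t₀ z)
          + (∑ z' : Z, M z' z * μ t₀ z')
          - (μ t₀ z / ζ t₀ z) * (∑ z' : Z, M z' z * ζ t₀ z')))
        = ∑ z : Z, ∑ z' : Z, M z' z * (μ t₀ z' * Real.log (μ t₀ z / ζ t₀ z)
            + μ t₀ z' - (μ t₀ z / ζ t₀ z) * ζ t₀ z') from
      Finset.sum_congr rfl fun z _ => expand z]
    rw [Finset.sum_comm]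
    have step : ∀ a b : Z, M a b * (μ t₀ a * Real.log (μ t₀ b / ζ t₀ b)
            + μ t₀ a - (μ t₀ b / ζ t₀ b) * ζ t₀ a)
        = -(M a b * ζ t₀ a * (μ t₀ a / ζ t₀ a)
            * ((μ t₀ b / ζ t₀ b) / (μ t₀ a / ζ t₀ a) - 1
              - Real.log ((μ t₀ b / ζ t₀ b) / (μ t₀ a / ζ t₀ a))))
          + M a b * (μ t₀ a * Real.log (μ t₀ a / ζ t₀ a)) := by
      intro a b
      rw [Real.log_div (hφne b) (hφne a)]
      field_simp [hζne a, hζne b, (hμp a).ne', (hμp b).ne']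
      ring
    calc ∑ a : Z, ∑ b : Z, M a b * (μ t₀ a * Real.log (μ t₀ b / ζ t₀ b)
            + μ t₀ a - (μ t₀ b / ζ t₀ b) * ζ t₀ a)
        = ∑ a : Z, ∑ b : Z, (-(M a b * ζ t₀ a * (μ t₀ a / ζ t₀ a)
            * ((μ t₀ b / ζ t₀ b) / (μ t₀ a / ζ t₀ a) - 1
              - Real.log ((μ t₀ b / ζ t₀ b) / (μ t₀ a / ζ t₀ a))))
          + M a b * (μ t₀ a * Real.log (μ t₀ a / ζ t₀ a))) := by
          exact Finset.sum_congr rfl fun a _ => Finset.sum_congr rfl fun b _ => step a b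
      _ = -(∑ a : Z, ∑ b : Z, M a b * ζ t₀ a * (μ t₀ a / ζ t₀ a)
            * ((μ t₀ b / ζ t₀ b) / (μ t₀ a / ζ t₀ a) - 1
              - Real.log ((μ t₀ b / ζ t₀ b) / (μ t₀ a / ζ t₀ a))))
            + ∑ a : Z, ∑ b : Z, M a b * (μ t₀ a * Real.log (μ t₀ a / ζ t₀ a)) := by
          exact split _ _
      _ = -fisherInfo (ζ t₀) (fun z => μ t₀ z / ζ t₀ z) M := by
          rw [key (fun a => μ t₀ a * Real.log (μ t₀ a / ζ t₀ a)), add_zero]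
          simp only [fisherInfo]
end

section
/- Let Y be a finite nonempty set, let L be an irreducible generator on Y, and let π ∈ P(Y) be a steady state of L, i.e. Σ_{y∈Y} π(y) L(y,y') = 0 for every y' ∈ Y. Then there exist δ > 0 and C > 0 such that for every irreducible generator N on Y with ‖N − L‖ ≤ δ and every steady state ρ ∈ P(Y) of N (i.e. Σ_y ρ(y) N(y,y') = 0 for all y') one has ‖ρ − π‖_TV ≤ C · ‖N − L‖. -/
open Finset Filter

/-- Maximum-entry norm of a matrix on a finite type. -/
noncomputable def matNorm {Y : Type*} [Fintype Y] (A : Y → Y → ℝ) : ℝ :=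
  ⨆ p : Y × Y, |A p.1 p.2|

/-- Total variation distance between two measures on a finite type. -/
noncomputable def tvDist {Y : Type*} [Fintype Y] (μ ν : Y → ℝ) : ℝ :=
  (1 / 2) * ∑ y : Y, |μ y - ν y|


set_option linter.unusedSectionVars false


section Aux
variable {Y : Type*} [Fintype Y] [Nonempty Y]

/-- one-step propagation of the maximum for harmonic functions -/
lemma harmonic_step (L : Y → Y → ℝ) (hgen : IsGenerator L) (f : Y → ℝ)
    (hf : ∀ y, ∑ y', L y y' * f y' = 0) {y : Y} (hy : ∀ w, f w ≤ f y)
    {y' : Y} (h : 0 < L y y') : f y' = f y := by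
  have h0 : ∑ y'' : Y, L y y'' * (f y'' - f y) = 0 := by
    have h1 := hf y
    have h2 := hgen.2 y
    have : ∑ y'' : Y, L y y'' * (f y'' - f y)
        = (∑ y'' : Y, L y y'' * f y'') - (∑ y'' : Y, L y y'') * f y := by
      rw [Finset.sum_mul, ← Finset.sum_sub_distrib]
      congr 1; ext y''; ring
    rw [this, h1, h2]; ring
  have hnonpos : ∀ y'' ∈ Finset.univ, L y y'' * (f y'' - f y) ≤ 0 := by
    intro y'' _
    by_cases hyy : y'' = y
    · simp [hyy]
    · exact mul_nonpos_of_nonneg_of_nonpos (hgen.1 y y'' (by exact fun h => hyy h.symm))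
        (by linarith [hy y''])
  have := (Finset.sum_eq_zero_iff_of_nonpos hnonpos).mp h0 y' (Finset.mem_univ _)
  have hne : f y' - f y = 0 := by
    rcases mul_eq_zero.mp this with h' | h'
    · exact absurd h' (ne_of_gt h)
    · exact h'
  linarith

/-- harmonic functions of an irreducible generator are constant -/
lemma harmonic_const (L : Y → Y → ℝ) (hgen : IsGenerator L) (hirr : IsIrreducibleGen L)
    (f : Y → ℝ) (hf : ∀ y, ∑ y', L y y' * f y' = 0) (z z' : Y) : f z = f z' := by
  obtain ⟨y₀, -, hy₀⟩ := Finset.exists_max_image Finset.univ f ⟨Classical.arbitrary Y, Finset.mem_univ _⟩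
  have hy₀' : ∀ w, f w ≤ f y₀ := fun w => hy₀ w (Finset.mem_univ _)
  suffices hall : ∀ w, f w = f y₀ by rw [hall z, hall z']
  intro w
  by_cases hw : w = y₀
  · rw [hw]
  · obtain ⟨ℓ, p, hℓ, hp0, hpl, hpos⟩ := hirr y₀ w (fun h => hw h.symm)
    have key : ∀ i, i ≤ ℓ → f (p i) = f y₀ := by
      intro i
      induction i with
      | zero => intro _; rw [hp0]
      | succ n ih =>
        intro hn
        have hfn : f (p n) = f y₀ := ih (Nat.le_of_succ_le hn)
        have hmax : ∀ w', f w' ≤ f (p n) := by rw [hfn]; exact hy₀'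
        have hpos' : 0 < L (p n) (p (n + 1)) := by
          have := hpos (n + 1) (Nat.le_add_left 1 n) hn
          simpa using this
        have := harmonic_step L hgen f hf hmax hpos'
        rw [this, hfn]
    rw [← hpl]; exact key ℓ le_rfl

/-- uniqueness: a signed measure in the left kernel of an irreducible generator
with zero total mass is zero -/
lemma left_ker_unique (L : Y → Y → ℝ) (hgen : IsGenerator L) (hirr : IsIrreducibleGen L)
    (π : Y → ℝ) (hπsum : ∑ y : Y, π y = 1) (hsteady : ∀ y' : Y, ∑ y : Y, π y * L y y' = 0)
    (v : Y → ℝ) (hv : ∀ y' : Y, ∑ y : Y, v y * L y y' = 0) (hvsum : ∑ y : Y, v y = 0) :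
    v = 0 := by
  classical
  set A : Matrix Y Y ℝ := Matrix.of L with hA
  -- right kernel = constants
  have hker1 : LinearMap.ker A.mulVecLin = Submodule.span ℝ {(fun _ => 1 : Y → ℝ)} := by
    apply le_antisymm
    · intro f hf
      have hf' : ∀ y, ∑ y', L y y' * f y' = 0 := by
        intro y
        have := congrFun (LinearMap.mem_ker.mp hf) y
        simpa [Matrix.mulVecLin, Matrix.mulVec, dotProduct, hA] using this
      have hc : ∀ z, f z = f (Classical.arbitrary Y) :=
        fun z => harmonic_const L hgen hirr f hf' z _
      have : f = (f (Classical.arbitrary Y)) • (fun _ => 1 : Y → ℝ) := by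
        ext z; simp [hc z]
      rw [this]
      exact Submodule.smul_mem _ _ (Submodule.mem_span_singleton_self _)
    · rw [Submodule.span_le, Set.singleton_subset_iff]
      refine LinearMap.mem_ker.mpr ?_
      ext y
      simpa [Matrix.mulVecLin, Matrix.mulVec, dotProduct, hA] using hgen.2 y
  have hfr1 : Module.finrank ℝ (LinearMap.ker A.mulVecLin) = 1 := by
    rw [hker1, finrank_span_singleton]
    intro h
    have := congrFun h (Classical.arbitrary Y)
    simpa using this
  -- rank-nullity for A and (Matrix.transpose A)
  have hrn : A.rank + Module.finrank ℝ (LinearMap.ker A.mulVecLin) = Fintype.card Y := by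
    have := LinearMap.finrank_range_add_finrank_ker A.mulVecLin
    simpa [Matrix.rank] using this
  have hrnT : (Matrix.transpose A).rank + Module.finrank ℝ (LinearMap.ker (Matrix.transpose A).mulVecLin) = Fintype.card Y := by
    have := LinearMap.finrank_range_add_finrank_ker (Matrix.transpose A).mulVecLin
    simpa [Matrix.rank] using this
  have hfrT : Module.finrank ℝ (LinearMap.ker (Matrix.transpose A).mulVecLin) = 1 := by
    rw [show (Matrix.transpose A).rank = A.rank from Matrix.rank_transpose A] at hrnT
    omega
  -- π and v are in ker (Matrix.transpose A).mulVecLin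
  have hmem : ∀ w : Y → ℝ, (∀ y', ∑ y, w y * L y y' = 0) → w ∈ LinearMap.ker (Matrix.transpose A).mulVecLin := by
    intro w hw
    refine LinearMap.mem_ker.mpr ?_
    ext y'
    have := hw y'
    simpa [Matrix.mulVecLin, Matrix.mulVec, dotProduct, Matrix.transpose, hA,
      mul_comm] using this
  have hπmem := hmem π hsteady
  have hπne : π ≠ 0 := by
    intro h; rw [h] at hπsum; simpa using hπsum
  have hspan : (Submodule.span ℝ {π} : Submodule ℝ (Y → ℝ)) = LinearMap.ker (Matrix.transpose A).mulVecLin := by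
    apply Submodule.eq_of_le_of_finrank_le
    · rw [Submodule.span_le, Set.singleton_subset_iff]; exact hπmem
    · rw [hfrT, finrank_span_singleton hπne]
  have hvmem : v ∈ Submodule.span ℝ ({π} : Set (Y → ℝ)) := by
    rw [hspan]; exact hmem v hv
  obtain ⟨c, hc⟩ := Submodule.mem_span_singleton.mp hvmem
  have : ∑ y : Y, v y = c := by
    rw [← hc]
    show ∑ y : Y, c * π y = c
    rw [← Finset.mul_sum, hπsum, mul_one]
  rw [← hc]
  rw [hvsum] at this
  rw [← this]
  simp

end Aux

section Aux2
variable {Y : Type*} [Fintype Y] [Nonempty Y]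

noncomputable def psiMap (L : Y → Y → ℝ) : (Y → ℝ) →ₗ[ℝ] (Y → ℝ) × ℝ :=
  LinearMap.prod
    { toFun := fun v y' => ∑ y, v y * L y y'
      map_add' := fun u v => by ext y'; simp [add_mul, Finset.sum_add_distrib]
      map_smul' := fun c v => by ext y'; simp [Finset.mul_sum, mul_assoc] }
    { toFun := fun v => ∑ y, v y
      map_add' := fun u v => by simp [Finset.sum_add_distrib]
      map_smul' := fun c v => by simp [Finset.mul_sum] }

lemma psiMap_fst (L : Y → Y → ℝ) (v : Y → ℝ) : (psiMap L v).1 = fun y' => ∑ y, v y * L y y' := rfl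
lemma psiMap_snd (L : Y → Y → ℝ) (v : Y → ℝ) : (psiMap L v).2 = ∑ y, v y := rfl

lemma exists_bound (L : Y → Y → ℝ)
    (huniq : ∀ v : Y → ℝ, (∀ y' : Y, ∑ y : Y, v y * L y y' = 0) → ∑ y : Y, v y = 0 → v = 0) :
    ∃ C : ℝ, 0 < C ∧ ∀ v : Y → ℝ, ‖v‖ ≤ C * ‖psiMap L v‖ := by
  have hinj : Function.Injective (psiMap L) := by
    rw [← LinearMap.ker_eq_bot]
    rw [Submodule.eq_bot_iff]
    intro v hv
    have h1 : (psiMap L v) = 0 := LinearMap.mem_ker.mp hv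
    refine huniq v (fun y' => ?_) ?_
    · have := congrFun (congrArg Prod.fst h1) y'
      simpa [psiMap_fst] using this
    · simpa [psiMap_snd] using congrArg Prod.snd h1
  let e := LinearEquiv.ofInjective (psiMap L) hinj
  let e' := e.toContinuousLinearEquiv
  refine ⟨‖(e'.symm : LinearMap.range (psiMap L) →L[ℝ] (Y → ℝ))‖ + 1, by positivity, fun v => ?_⟩
  have h1 : v = e'.symm (e' v) := (e'.symm_apply_apply v).symm
  have h2 : ‖e'.symm (e' v)‖ ≤ ‖(e'.symm : LinearMap.range (psiMap L) →L[ℝ] (Y → ℝ))‖ * ‖e' v‖ :=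
    (e'.symm : LinearMap.range (psiMap L) →L[ℝ] (Y → ℝ)).le_opNorm (e' v)
  have h3 : ‖e' v‖ = ‖psiMap L v‖ := by
    have : ((e' v : LinearMap.range (psiMap L)) : (Y → ℝ) × ℝ) = psiMap L v := by
      show ((e v : LinearMap.range (psiMap L)) : (Y → ℝ) × ℝ) = psiMap L v
      exact LinearEquiv.ofInjective_apply _ _
    rw [← this]
    rfl
  calc ‖v‖ = ‖e'.symm (e' v)‖ := by rw [e'.symm_apply_apply]
    _ ≤ ‖(e'.symm : LinearMap.range (psiMap L) →L[ℝ] (Y → ℝ))‖ * ‖e' v‖ := h2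
    _ ≤ (‖(e'.symm : LinearMap.range (psiMap L) →L[ℝ] (Y → ℝ))‖ + 1) * ‖e' v‖ := by
        apply mul_le_mul_of_nonneg_right (by linarith) (norm_nonneg _)
    _ = _ := by rw [h3]

end Aux2


section Aux3
variable {Y : Type*} [Fintype Y] [Nonempty Y]

lemma abs_le_matNorm (A : Y → Y → ℝ) (y y' : Y) : |A y y'| ≤ matNorm A :=
  le_ciSup (f := fun p : Y × Y => |A p.1 p.2|) (Set.Finite.bddAbove (Set.finite_range _)) ((y, y') : Y × Y)

lemma matNorm_nonneg (A : Y → Y → ℝ) : 0 ≤ matNorm A := by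
  obtain ⟨y⟩ := ‹Nonempty Y›
  exact le_trans (abs_nonneg (A y y)) (abs_le_matNorm A y y)

end Aux3

/-- Lipschitz stability of steady states of irreducible
generators near a fixed irreducible generator. -/
theorem steady_state_stability
    {Y : Type*} [Fintype Y] [Nonempty Y]
    (L : Y → Y → ℝ) (hgen : IsGenerator L) (hirr : IsIrreducibleGen L)
    (π : Y → ℝ) (hπ : IsProb π) (hsteady : ∀ y' : Y, ∑ y : Y, π y * L y y' = 0) :
    ∃ δ : ℝ, 0 < δ ∧ ∃ C : ℝ, 0 < C ∧
      ∀ N : Y → Y → ℝ, IsGenerator N → IsIrreducibleGen N →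
        matNorm (fun y y' => N y y' - L y y') ≤ δ →
        ∀ ρ : Y → ℝ, IsProb ρ → (∀ y' : Y, ∑ y : Y, ρ y * N y y' = 0) →
          tvDist ρ π ≤ C * matNorm (fun y y' => N y y' - L y y') := by
  classical
  obtain ⟨C, hC, hbound⟩ := exists_bound L (left_ker_unique L hgen hirr π hπ.2 hsteady)
  refine ⟨1, one_pos, (Fintype.card Y : ℝ) * C / 2 + 1, by positivity, ?_⟩
  intro N hNgen hNirr hNnorm ρ hρ hρsteady
  set d : Y → Y → ℝ := fun y y' => N y y' - L y y' with hd
  set m := matNorm d with hm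
  have hm0 : 0 ≤ m := matNorm_nonneg d
  set v : Y → ℝ := fun y => ρ y - π y with hv
  have key : ∀ y', ∑ y, v y * L y y' = ∑ y, ρ y * (-(d y y')) := by
    intro y'
    have h1 := hsteady y'
    have h2 := hρsteady y'
    have e1 : ∑ y, v y * L y y' = (∑ y, ρ y * L y y') - ∑ y, π y * L y y' := by
      rw [← Finset.sum_sub_distrib]
      exact Finset.sum_congr rfl (fun y _ => by simp [hv]; ring)
    rw [e1, h1, sub_zero]
    have e2 : (∑ y, ρ y * L y y') = (∑ y, ρ y * L y y') - ∑ y, ρ y * N y y' := by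
      rw [h2, sub_zero]
    rw [e2, ← Finset.sum_sub_distrib]
    exact Finset.sum_congr rfl (fun y _ => by simp [hd]; ring)
  have habs : ∀ y', |∑ y, ρ y * (-(d y y'))| ≤ m := by
    intro y'
    calc |∑ y, ρ y * (-(d y y'))| ≤ ∑ y, |ρ y * (-(d y y'))| := Finset.abs_sum_le_sum_abs _ _
      _ ≤ ∑ y, ρ y * m := by
          apply Finset.sum_le_sum
          intro y _
          rw [abs_mul, abs_of_nonneg (hρ.1 y), abs_neg]
          exact mul_le_mul_of_nonneg_left (abs_le_matNorm d y y') (hρ.1 y)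
      _ = m := by rw [← Finset.sum_mul, hρ.2, one_mul]
  have hpsi : ‖psiMap L v‖ ≤ m := by
    rw [Prod.norm_def]
    apply max_le
    · rw [psiMap_fst]
      apply (pi_norm_le_iff_of_nonneg hm0).mpr
      intro y'
      rw [Real.norm_eq_abs, key y']
      exact habs y'
    · rw [psiMap_snd]
      have : ∑ y, v y = 0 := by
        simp only [hv]
        rw [Finset.sum_sub_distrib, hρ.2, hπ.2, sub_self]
      rw [this]
      simpa using hm0
  have hvnorm : ‖v‖ ≤ C * m :=
    le_trans (hbound v) (mul_le_mul_of_nonneg_left hpsi (le_of_lt hC))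
  have htv : tvDist ρ π ≤ (Fintype.card Y : ℝ) * C / 2 * m := by
    unfold tvDist
    have hsum : ∑ y : Y, |ρ y - π y| ≤ (Fintype.card Y : ℝ) * (C * m) := by
      calc ∑ y : Y, |ρ y - π y| ≤ ∑ _y : Y, C * m := by
            apply Finset.sum_le_sum
            intro y _
            calc |ρ y - π y| = ‖v y‖ := by rw [Real.norm_eq_abs]
              _ ≤ ‖v‖ := norm_le_pi_norm v y
              _ ≤ C * m := hvnorm
        _ = (Fintype.card Y : ℝ) * (C * m) := by
            rw [Finset.sum_const, Finset.card_univ, nsmul_eq_mul]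
    linarith
  calc tvDist ρ π ≤ (Fintype.card Y : ℝ) * C / 2 * m := htv
    _ ≤ ((Fintype.card Y : ℝ) * C / 2 + 1) * m := by nlinarith
end

section
/- Let M be an irreducible generator on a finite set Z with |Z| ≥ 2 and let π ∈ P_+(Z) be its steady state, i.e. Σ_{z∈Z} π(z) M(z,z') = 0 for every z' ∈ Z. For ζ ∈ P_+(Z) and f : Z → ℝ define (f, −Mf)_ζ = −Σ_{z,z'∈Z} f(z) M(z,z') f(z') ζ(z). Then: (i) if ζ ≠ π, then for every K ∈ ℝ there exists a nonconstant f : Z → ℝ with (f, −Mf)_ζ / var_ζ(f) < K (so the naive generalised Poincaré constant inf over nonconstant f of (f,−Mf)_ζ / var_ζ(f) equals −∞); (ii) if ζ = π, then there exists α > 0 such that (f, −Mf)_π ≥ α · var_π(f) for every f : Z → ℝ. In particular, the set { (f,−Mf)_ζ / var_ζ(f) : f nonconstant } has a positive infimum if and only if ζ = π. -/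
open Finset Filter

/-- The naive (bilinear) Dirichlet form `(f, -Mf)_ζ`. -/
noncomputable def naiveForm {Z : Type*} [Fintype Z]
    (ζ f : Z → ℝ) (M : Z → Z → ℝ) : ℝ :=
  -∑ z : Z, ∑ z' : Z, f z * M z z' * f z' * ζ z

section aux
variable {Z : Type*} [Fintype Z]

lemma varWrt_eq_sum (ζ : Z → ℝ) (hζ : ∑ z : Z, ζ z = 1) (f : Z → ℝ) :
    varWrt ζ f = ∑ z : Z, (f z - expec ζ f) ^ 2 * ζ z := by
  unfold varWrt expec
  have h : ∀ z : Z, (f z - ∑ x : Z, f x * ζ x) ^ 2 * ζ z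
      = f z ^ 2 * ζ z - 2 * (∑ x : Z, f x * ζ x) * (f z * ζ z)
        + (∑ x : Z, f x * ζ x) ^ 2 * ζ z := by
    intro z; ring
  rw [Finset.sum_congr rfl (fun z _ => h z), Finset.sum_add_distrib,
    Finset.sum_sub_distrib, ← Finset.mul_sum, ← Finset.mul_sum, hζ]
  ring

lemma varWrt_pos (ζ : Z → ℝ) (hζ : IsPosProb ζ) (f : Z → ℝ) (hf : Nonconst f) :
    0 < varWrt ζ f := by
  obtain ⟨z0, z1, hz⟩ := hf
  rw [varWrt_eq_sum ζ hζ.2 f]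
  have hne : f z0 ≠ expec ζ f ∨ f z1 ≠ expec ζ f := by
    by_contra h
    push_neg at h
    exact hz (h.1.trans h.2.symm)
  have hnonneg : ∀ z ∈ Finset.univ, (0:ℝ) ≤ (f z - expec ζ f) ^ 2 * ζ z :=
    fun z _ => mul_nonneg (sq_nonneg _) (hζ.1 z).le
  rcases hne with h | h
  · refine Finset.sum_pos' hnonneg ⟨z0, Finset.mem_univ z0, ?_⟩
    have h0 : f z0 - expec ζ f ≠ 0 := sub_ne_zero.mpr h
    exact mul_pos (by positivity) (hζ.1 z0)
  · refine Finset.sum_pos' hnonneg ⟨z1, Finset.mem_univ z1, ?_⟩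
    have h0 : f z1 - expec ζ f ≠ 0 := sub_ne_zero.mpr h
    exact mul_pos (by positivity) (hζ.1 z1)

lemma varWrt_affine (ζ : Z → ℝ) (hζ : ∑ z : Z, ζ z = 1) (a t : ℝ) (g : Z → ℝ) :
    varWrt ζ (fun z => a + t * g z) = t ^ 2 * varWrt ζ g := by
  unfold varWrt expec
  have h1 : ∀ z : Z, (a + t * g z) ^ 2 * ζ z
      = a ^ 2 * ζ z + 2 * a * t * (g z * ζ z) + t ^ 2 * (g z ^ 2 * ζ z) := by
    intro z; ring
  have h2 : ∀ z : Z, (a + t * g z) * ζ z = a * ζ z + t * (g z * ζ z) := by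
    intro z; ring
  rw [Finset.sum_congr rfl (fun z _ => h1 z), Finset.sum_congr rfl (fun z _ => h2 z),
    Finset.sum_add_distrib, Finset.sum_add_distrib, Finset.sum_add_distrib,
    ← Finset.mul_sum, ← Finset.mul_sum, ← Finset.mul_sum, ← Finset.mul_sum, ← Finset.mul_sum, hζ]
  ring


lemma naive_eq_dirichlet (M : Z → Z → ℝ) (hM : ∀ z : Z, ∑ z' : Z, M z z' = 0)
    (π : Z → ℝ) (hsteady : ∀ z' : Z, ∑ z : Z, π z * M z z' = 0) (f : Z → ℝ) :
    naiveForm π f M = dirichletForm π f M := by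
  unfold naiveForm dirichletForm
  have h1 : ∀ z : Z, ∑ z' : Z, M z z' * (π z * f z ^ 2) = 0 := by
    intro z; rw [← Finset.sum_mul, hM z, zero_mul]
  have h2 : ∀ z' : Z, ∑ z : Z, π z * M z z' * f z' ^ 2 = 0 := by
    intro z'; rw [← Finset.sum_mul, hsteady z', zero_mul]
  have key : ∑ z : Z, ∑ z' : Z, M z z' * π z * (f z - f z') ^ 2
      = -2 * ∑ z : Z, ∑ z' : Z, f z * M z z' * f z' * π z := by
    have hpt : ∀ z z' : Z, M z z' * π z * (f z - f z') ^ 2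
        = M z z' * (π z * f z ^ 2) + π z * M z z' * f z' ^ 2
          - 2 * (f z * M z z' * f z' * π z) := by
      intro z z'; ring
    calc ∑ z : Z, ∑ z' : Z, M z z' * π z * (f z - f z') ^ 2
        = ∑ z : Z, ∑ z' : Z, (M z z' * (π z * f z ^ 2) + π z * M z z' * f z' ^ 2
            - 2 * (f z * M z z' * f z' * π z)) := by
          exact Finset.sum_congr rfl fun z _ => Finset.sum_congr rfl fun z' _ => hpt z z'
      _ = ∑ z : Z, ((∑ z' : Z, M z z' * (π z * f z ^ 2))
            + (∑ z' : Z, π z * M z z' * f z' ^ 2)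
            - (∑ z' : Z, 2 * (f z * M z z' * f z' * π z))) := by
          exact Finset.sum_congr rfl fun z _ => by
            rw [Finset.sum_sub_distrib, Finset.sum_add_distrib]
      _ = (∑ z : Z, ∑ z' : Z, π z * M z z' * f z' ^ 2)
            - ∑ z : Z, ∑ z' : Z, 2 * (f z * M z z' * f z' * π z) := by
          rw [Finset.sum_sub_distrib, Finset.sum_add_distrib]
          simp [h1]
      _ = - ∑ z : Z, ∑ z' : Z, 2 * (f z * M z z' * f z' * π z) := by
          rw [Finset.sum_comm]
          simp [h2]
      _ = -2 * ∑ z : Z, ∑ z' : Z, f z * M z z' * f z' * π z := by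
          simp [← Finset.mul_sum]
  rw [key]; ring

lemma dirichlet_nonneg (M : Z → Z → ℝ) (hM : ∀ z z' : Z, z ≠ z' → 0 ≤ M z z')
    (π : Z → ℝ) (hπ : ∀ z, 0 ≤ π z) (f : Z → ℝ) : 0 ≤ dirichletForm π f M := by
  unfold dirichletForm
  have : ∀ z z' : Z, 0 ≤ M z z' * π z * (f z - f z') ^ 2 := by
    intro z z'
    rcases eq_or_ne z z' with rfl | h
    · simp
    · exact mul_nonneg (mul_nonneg (hM z z' h) (hπ z)) (sq_nonneg _)
  exact mul_nonneg (by norm_num) (Finset.sum_nonneg fun z _ =>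
    Finset.sum_nonneg fun z' _ => this z z')

lemma dirichlet_shift (π : Z → ℝ) (M : Z → Z → ℝ) (f : Z → ℝ) (m : ℝ) :
    dirichletForm π (fun z => f z - m) M = dirichletForm π f M := by
  unfold dirichletForm
  congr 1
  exact Finset.sum_congr rfl fun z _ => Finset.sum_congr rfl fun z' _ => by ring_nf

lemma dirichlet_smul (π : Z → ℝ) (M : Z → Z → ℝ) (c : ℝ) (g : Z → ℝ) :
    dirichletForm π (fun z => c * g z) M = c ^ 2 * dirichletForm π g M := by
  unfold dirichletForm
  have h : ∀ z z' : Z, M z z' * π z * (c * g z - c * g z') ^ 2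
      = c ^ 2 * (M z z' * π z * (g z - g z') ^ 2) := by intros; ring
  simp_rw [h, ← Finset.mul_sum]
  ring

lemma edge_eq_of_dirichlet_zero (M : Z → Z → ℝ) (hM : ∀ z z' : Z, z ≠ z' → 0 ≤ M z z')
    (π : Z → ℝ) (hπ : ∀ z, 0 < π z) (f : Z → ℝ)
    (hD : dirichletForm π f M = 0) :
    ∀ v w : Z, 0 < M v w → f v = f w := by
  have hterm : ∀ z z' : Z, 0 ≤ M z z' * π z * (f z - f z') ^ 2 := by
    intro z z'
    rcases eq_or_ne z z' with rfl | h
    · simp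
    · exact mul_nonneg (mul_nonneg (hM z z' h) (hπ z).le) (sq_nonneg _)
  have hsum : ∑ z : Z, ∑ z' : Z, M z z' * π z * (f z - f z') ^ 2 = 0 := by
    unfold dirichletForm at hD
    linarith
  have hinner : ∀ z ∈ Finset.univ, ∑ z' : Z, M z z' * π z * (f z - f z') ^ 2 = 0 :=
    (Finset.sum_eq_zero_iff_of_nonneg (fun z _ =>
      Finset.sum_nonneg (fun z' _ => hterm z z'))).mp hsum
  intro v w hvw
  have h0 : M v w * π v * (f v - f w) ^ 2 = 0 :=
    (Finset.sum_eq_zero_iff_of_nonneg (fun z' _ => hterm v z')).mp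
      (hinner v (Finset.mem_univ v)) w (Finset.mem_univ w)
  have hne : M v w * π v ≠ 0 := (mul_pos hvw (hπ v)).ne'
  have := (mul_eq_zero.mp h0).resolve_left hne
  have := pow_eq_zero_iff (n := 2) (by norm_num) |>.mp this
  linarith [sub_eq_zero.mp this]

lemma constant_of_dirichlet_zero (M : Z → Z → ℝ) (hgen : IsGenerator M)
    (hirr : IsIrreducibleGen M) (π : Z → ℝ) (hπ : ∀ z, 0 < π z) (f : Z → ℝ)
    (hD : dirichletForm π f M = 0) : ∀ z z' : Z, f z = f z' := by
  have hedge := edge_eq_of_dirichlet_zero M hgen.1 π hπ f hD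
  intro z z'
  rcases eq_or_ne z z' with rfl | h
  · rfl
  obtain ⟨ℓ, p, hℓ, hp0, hpℓ, hpos⟩ := hirr z z' h
  have key : ∀ i : ℕ, i ≤ ℓ → f (p i) = f (p 0) := by
    intro i
    induction i with
    | zero => intro _; rfl
    | succ n ih =>
      intro hn
      have h1 := hedge (p n) (p (n+1)) (by
        have := hpos (n+1) (by omega) hn
        simpa using this)
      rw [← h1]
      exact ih (by omega)
  rw [← hp0, ← hpℓ]
  exact (key ℓ le_rfl).symm


lemma expec_smul (π : Z → ℝ) (c : ℝ) (g : Z → ℝ) :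
    expec π (fun z => c * g z) = c * expec π g := by
  simp [expec, Finset.mul_sum, mul_assoc]

lemma sum_sq_smul (π : Z → ℝ) (c : ℝ) (g : Z → ℝ) :
    ∑ z : Z, (c * g z) ^ 2 * π z = c ^ 2 * ∑ z : Z, g z ^ 2 * π z := by
  rw [Finset.mul_sum]
  exact Finset.sum_congr rfl fun z _ => by ring

lemma expec_sub_const (π : Z → ℝ) (hπ : ∑ z : Z, π z = 1) (f : Z → ℝ) (m : ℝ) :
    expec π (fun z => f z - m) = expec π f - m := by
  unfold expec
  have : ∀ z : Z, (f z - m) * π z = f z * π z - m * π z := fun z => by ring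
  rw [Finset.sum_congr rfl fun z _ => this z, Finset.sum_sub_distrib, ← Finset.mul_sum, hπ,
    mul_one]

lemma poincare (hcard : 2 ≤ Fintype.card Z) (M : Z → Z → ℝ) (hgen : IsGenerator M)
    (hirr : IsIrreducibleGen M) (π : Z → ℝ) (hπ : IsPosProb π) :
    ∃ α : ℝ, 0 < α ∧ ∀ f : Z → ℝ, α * varWrt π f ≤ dirichletForm π f M := by
  haveI : Nonempty Z := Fintype.card_pos_iff.mp (by omega)
  classical
  set S : Set (Z → ℝ) := {f | expec π f = 0 ∧ ∑ z : Z, f z ^ 2 * π z = 1} with hS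
  have hc1 : Continuous fun f : Z → ℝ => expec π f := by
    unfold expec
    exact continuous_finset_sum _ fun z _ => (continuous_apply z).mul continuous_const
  have hc2 : Continuous fun f : Z → ℝ => ∑ z : Z, f z ^ 2 * π z :=
    continuous_finset_sum _ fun z _ => ((continuous_apply z).pow 2).mul continuous_const
  have hclosed : IsClosed S :=
    (isClosed_eq hc1 continuous_const).inter (isClosed_eq hc2 continuous_const)
  obtain ⟨zm, _, hzm⟩ := Finset.exists_min_image Finset.univ π Finset.univ_nonempty
  have hpm : 0 < π zm := hπ.1 zm
  have hsub : S ⊆ Metric.closedBall 0 (Real.sqrt (π zm)⁻¹) := by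
    rintro f ⟨-, hf2⟩
    rw [Metric.mem_closedBall, dist_pi_le_iff (Real.sqrt_nonneg _)]
    intro z
    simp only [Pi.zero_apply, Real.dist_eq, sub_zero]
    have h1 : f z ^ 2 * π z ≤ 1 := by
      rw [← hf2]
      exact Finset.single_le_sum (fun z' _ => mul_nonneg (sq_nonneg _) (hπ.1 z').le)
        (Finset.mem_univ z)
    have h2 : f z ^ 2 ≤ (π zm)⁻¹ := by
      rw [← one_div, le_div_iff₀ hpm]
      calc f z ^ 2 * π zm ≤ f z ^ 2 * π z :=
            mul_le_mul_of_nonneg_left (hzm z (Finset.mem_univ z)) (sq_nonneg _)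
        _ ≤ 1 := h1
    calc |f z| = Real.sqrt (f z ^ 2) := (Real.sqrt_sq_eq_abs _).symm
      _ ≤ Real.sqrt (π zm)⁻¹ := Real.sqrt_le_sqrt h2
  have hbdd : Bornology.IsBounded S := Metric.isBounded_closedBall.subset hsub
  have hcompact : IsCompact S := Metric.isCompact_of_isClosed_isBounded hclosed hbdd
  -- S is nonempty
  obtain ⟨z0, z1, hz01⟩ := Fintype.exists_pair_of_one_lt_card (α := Z) (by omega)
  have hSne : S.Nonempty := by
    set g : Z → ℝ := fun z => if z = z0 then 1 else 0 with hg
    have hgnc : Nonconst g := ⟨z0, z1, by simp [hg, hz01.symm]⟩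
    set h : Z → ℝ := fun z => g z - expec π g with hh
    have hhe : expec π h = 0 := by
      rw [hh, expec_sub_const π hπ.2, sub_self]
    set s : ℝ := ∑ z : Z, h z ^ 2 * π z with hs
    have hspos : 0 < s := by
      rw [hs, hh, ← varWrt_eq_sum π hπ.2 g]
      exact varWrt_pos π hπ g hgnc
    refine ⟨fun z => (Real.sqrt s)⁻¹ * h z, ?_, ?_⟩
    · rw [expec_smul, hhe, mul_zero]
    · rw [sum_sq_smul, ← hs, inv_pow, Real.sq_sqrt hspos.le, inv_mul_cancel₀ hspos.ne']
  have hDcont : Continuous fun f : Z → ℝ => dirichletForm π f M := by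
    unfold dirichletForm
    exact continuous_const.mul (continuous_finset_sum _ fun z _ =>
      continuous_finset_sum _ fun z' _ => continuous_const.mul
        (((continuous_apply z).sub (continuous_apply z')).pow 2))
  obtain ⟨f0, hf0S, hf0min⟩ := hcompact.exists_isMinOn hSne hDcont.continuousOn
  refine ⟨dirichletForm π f0 M, ?_, ?_⟩
  · rcases (dirichlet_nonneg M hgen.1 π (fun z => (hπ.1 z).le) f0).lt_or_eq with h | h
    · exact h
    exfalso
    have hconst := constant_of_dirichlet_zero M hgen hirr π hπ.1 f0 h.symm
    obtain ⟨he, hsq⟩ := hf0S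
    obtain ⟨w⟩ := ‹Nonempty Z›
    have hval : ∀ z, f0 z = f0 w := fun z => hconst z w
    have he' : f0 w = 0 := by
      have h1 : expec π f0 = f0 w := by
        unfold expec
        rw [Finset.sum_congr rfl fun z _ => by rw [hval z], ← Finset.mul_sum, hπ.2, mul_one]
      rw [← h1, he]
    have h10 : (1:ℝ) = 0 := by
      rw [← hsq]
      exact Finset.sum_eq_zero fun z _ => by rw [hval z, he']; ring
    norm_num at h10
  · intro f
    set m := expec π f with hm
    have hDg : dirichletForm π (fun z => f z - m) M = dirichletForm π f M :=
      dirichlet_shift π M f m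
    have hge : expec π (fun z => f z - m) = 0 := by
      rw [expec_sub_const π hπ.2, ← hm, sub_self]
    have hsvar : ∑ z : Z, (f z - m) ^ 2 * π z = varWrt π f := by
      rw [varWrt_eq_sum π hπ.2 f, ← hm]
    have hvnn : 0 ≤ varWrt π f := by
      rw [← hsvar]
      exact Finset.sum_nonneg fun z _ => mul_nonneg (sq_nonneg _) (hπ.1 z).le
    rcases hvnn.lt_or_eq with hv | hv
    · have hf1S : (fun z => (Real.sqrt (varWrt π f))⁻¹ * (f z - m)) ∈ S := by
        refine ⟨?_, ?_⟩
        · rw [expec_smul, hge, mul_zero]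
        · rw [sum_sq_smul, hsvar, inv_pow, Real.sq_sqrt hv.le, inv_mul_cancel₀ hv.ne']
      have hmin : dirichletForm π f0 M ≤
          dirichletForm π (fun z => (Real.sqrt (varWrt π f))⁻¹ * (f z - m)) M := hf0min hf1S
      rw [dirichlet_smul, hDg, inv_pow, Real.sq_sqrt hv.le, inv_mul_eq_div,
        le_div_iff₀ hv] at hmin
      linarith
    · rw [← hv, mul_zero]
      exact dirichlet_nonneg M hgen.1 π (fun z => (hπ.1 z).le) f


lemma steady_unique (hcard : 2 ≤ Fintype.card Z) (M : Z → Z → ℝ) (hgen : IsGenerator M)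
    (hirr : IsIrreducibleGen M) (π : Z → ℝ) (hπ : IsPosProb π)
    (hsteady : ∀ z' : Z, ∑ z : Z, π z * M z z' = 0)
    (ζ : Z → ℝ) (hζ : IsPosProb ζ)
    (hζs : ∀ z' : Z, ∑ z : Z, ζ z * M z z' = 0) : ζ = π := by
  haveI : Nonempty Z := Fintype.card_pos_iff.mp (by omega)
  obtain ⟨w0, -, hw0⟩ := Finset.exists_max_image Finset.univ (fun z => π z / ζ z)
    Finset.univ_nonempty
  set Mx : ℝ := π w0 / ζ w0 with hMx
  have hub : ∀ z : Z, π z ≤ Mx * ζ z := by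
    intro z
    have := hw0 z (Finset.mem_univ z)
    rw [div_le_div_iff₀ (hζ.1 z) (hζ.1 w0)] at this
    rw [hMx, div_mul_eq_mul_div, le_div_iff₀ (hζ.1 w0)]
    linarith
  have step : ∀ w : Z, π w = Mx * ζ w → ∀ v : Z, 0 < M v w → π v = Mx * ζ v := by
    intro w hw v hv
    have hsum : ∑ z : Z, (π z - Mx * ζ z) * M z w = 0 := by
      have hpt : ∀ z : Z, (π z - Mx * ζ z) * M z w
          = π z * M z w - Mx * (ζ z * M z w) := fun z => by ring
      rw [Finset.sum_congr rfl fun z _ => hpt z, Finset.sum_sub_distrib, hsteady w,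
        ← Finset.mul_sum, hζs w, mul_zero, sub_zero]
    have hnonpos : ∀ z ∈ Finset.univ, (π z - Mx * ζ z) * M z w ≤ 0 := by
      intro z _
      rcases eq_or_ne z w with rfl | hzw
      · rw [hw, sub_self, zero_mul]
      · exact mul_nonpos_iff.mpr (Or.inr ⟨sub_nonpos.mpr (hub z), hgen.1 z w hzw⟩)
    have hz := (Finset.sum_eq_zero_iff_of_nonpos hnonpos).mp hsum v (Finset.mem_univ v)
    have := (mul_eq_zero.mp hz).resolve_right hv.ne'
    linarith [sub_eq_zero.mp this]
  have hall : ∀ z : Z, π z = Mx * ζ z := by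
    intro z
    have hw0' : π w0 = Mx * ζ w0 := by
      rw [hMx, div_mul_cancel₀ _ (hζ.1 w0).ne']
    rcases eq_or_ne z w0 with rfl | hz
    · exact hw0'
    obtain ⟨ℓ, p, hℓ, hp0, hpℓ, hpos⟩ := hirr z w0 hz
    have key : ∀ i : ℕ, i ≤ ℓ → π (p (ℓ - i)) = Mx * ζ (p (ℓ - i)) := by
      intro i
      induction i with
      | zero => intro _; simpa [hpℓ] using hw0'
      | succ n ih =>
        intro hn
        have hn' : n ≤ ℓ := by omega
        have hM : 0 < M (p (ℓ - (n+1))) (p (ℓ - n)) := by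
          have h := hpos (ℓ - n) (by omega) (by omega)
          rwa [show ℓ - n - 1 = ℓ - (n+1) by omega] at h
        exact step _ (ih hn') _ hM
    have := key ℓ le_rfl
    rwa [Nat.sub_self, hp0] at this
  have hMx1 : Mx = 1 := by
    have h1 : ∑ z : Z, π z = Mx * ∑ z : Z, ζ z := by
      rw [Finset.mul_sum]
      exact Finset.sum_congr rfl fun z _ => hall z
    rw [hπ.2, hζ.2, mul_one] at h1
    exact h1.symm
  funext z
  have := hall z
  rw [hMx1, one_mul] at this
  exact this.symm


lemma naive_unbounded (hcard : 2 ≤ Fintype.card Z) (M : Z → Z → ℝ) (hgen : IsGenerator M)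
    (hirr : IsIrreducibleGen M) (π : Z → ℝ) (hπ : IsPosProb π)
    (hsteady : ∀ z' : Z, ∑ z : Z, π z * M z z' = 0)
    (ζ : Z → ℝ) (hζ : IsPosProb ζ) (hne : ζ ≠ π) (K : ℝ) :
    ∃ f : Z → ℝ, Nonconst f ∧ naiveForm ζ f M / varWrt ζ f < K := by
  classical
  set b : Z → ℝ := fun z' => ∑ z : Z, ζ z * M z z' with hb
  have hbz : ∀ z' : Z, ∑ z : Z, ζ z * M z z' = b z' := fun z' => rfl
  have hbne : ∃ z', b z' ≠ 0 := by
    by_contra h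
    push_neg at h
    exact hne (steady_unique hcard M hgen hirr π hπ hsteady ζ hζ fun z' => h z')
  have hbnc : Nonconst b := by
    obtain ⟨w, hw⟩ := hbne
    by_contra h
    unfold Nonconst at h
    push_neg at h
    have hbsum : ∑ z' : Z, b z' = 0 := by
      rw [hb, Finset.sum_comm]
      simp [← Finset.mul_sum, hgen.2]
    have hcst : ∑ z' : Z, b z' = (Fintype.card Z : ℝ) * b w := by
      rw [Finset.sum_congr rfl fun x _ => h x w]
      simp [Finset.sum_const, Finset.card_univ, nsmul_eq_mul]
    have hc0 : (0:ℝ) < (Fintype.card Z : ℝ) := by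
      have : 0 < Fintype.card Z := by omega
      exact_mod_cast this
    apply hw
    have := hbsum.symm.trans hcst
    exact (mul_eq_zero.mp this.symm).resolve_left hc0.ne'
  have hV : 0 < varWrt ζ b := varWrt_pos ζ hζ b hbnc
  set V : ℝ := varWrt ζ b with hVdef
  set Nb : ℝ := naiveForm ζ b M with hNb
  set B : ℝ := ∑ z' : Z, b z' ^ 2 with hBdef
  have hB : 0 < B := by
    obtain ⟨w, hw⟩ := hbne
    refine Finset.sum_pos' (fun z _ => sq_nonneg _) ⟨w, Finset.mem_univ w, by positivity⟩
  set A : ℝ := |Nb - K * V| with hA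
  set t : ℝ := B / (A + 1) with ht
  have hA0 : 0 ≤ A := abs_nonneg _
  have htpos : 0 < t := div_pos hB (by positivity)
  refine ⟨fun z => 1 + t * b z, ?_, ?_⟩
  · obtain ⟨z0, z1, h01⟩ := hbnc
    refine ⟨z0, z1, fun hc => h01 (mul_left_cancel₀ htpos.ne' ?_)⟩
    have hc' : 1 + t * b z0 = 1 + t * b z1 := hc
    linarith
  · have hvar : varWrt ζ (fun z => 1 + t * b z) = t ^ 2 * V :=
      varWrt_affine ζ hζ.2 1 t b
    have hnf : naiveForm ζ (fun z => 1 + t * b z) M = -(t * B) + t ^ 2 * Nb := by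
      unfold naiveForm
      have expand : ∑ z : Z, ∑ z' : Z, (1 + t * b z) * M z z' * (1 + t * b z') * ζ z
          = (∑ z : Z, ∑ z' : Z, ζ z * M z z')
            + (∑ z : Z, ∑ z' : Z, t * (b z * (ζ z * M z z')))
            + (∑ z : Z, ∑ z' : Z, t * ((ζ z * M z z') * b z'))
            + (∑ z : Z, ∑ z' : Z, t ^ 2 * (b z * M z z' * b z' * ζ z)) := by
        rw [← Finset.sum_add_distrib, ← Finset.sum_add_distrib, ← Finset.sum_add_distrib]
        refine Finset.sum_congr rfl fun z _ => ?_
        rw [← Finset.sum_add_distrib, ← Finset.sum_add_distrib, ← Finset.sum_add_distrib]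
        exact Finset.sum_congr rfl fun z' _ => by ring
      have e1 : ∑ z : Z, ∑ z' : Z, ζ z * M z z' = 0 := by
        simp [← Finset.mul_sum, hgen.2]
      have e2 : ∑ z : Z, ∑ z' : Z, t * (b z * (ζ z * M z z')) = 0 := by
        simp [← Finset.mul_sum, hgen.2]
      have e3 : ∑ z : Z, ∑ z' : Z, t * ((ζ z * M z z') * b z') = t * B := by
        rw [Finset.sum_comm]
        have hin : ∀ z' : Z, ∑ z : Z, t * ((ζ z * M z z') * b z') = t * b z' ^ 2 := by
          intro z'
          rw [← Finset.mul_sum, ← Finset.sum_mul, hbz z']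
          ring
        rw [Finset.sum_congr rfl fun z' _ => hin z', ← Finset.mul_sum, hBdef]
      have e4 : ∑ z : Z, ∑ z' : Z, t ^ 2 * (b z * M z z' * b z' * ζ z) = t ^ 2 * (-Nb) := by
        have hin : ∀ z : Z, ∑ z' : Z, t ^ 2 * (b z * M z z' * b z' * ζ z)
            = t ^ 2 * ∑ z' : Z, b z * M z z' * b z' * ζ z :=
          fun z => (Finset.mul_sum _ _ _).symm
        rw [Finset.sum_congr rfl fun z _ => hin z, ← Finset.mul_sum, hNb]
        unfold naiveForm
        ring
      rw [expand, e1, e2, e3, e4]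
      ring
    rw [hnf, hvar, div_lt_iff₀ (by positivity)]
    have hkey : t * (Nb - K * V) < B := by
      calc t * (Nb - K * V) ≤ t * A :=
            mul_le_mul_of_nonneg_left (le_abs_self _) htpos.le
        _ < B := by
            rw [ht, div_mul_eq_mul_div, div_lt_iff₀ (by positivity)]
            nlinarith
    nlinarith [mul_lt_mul_of_pos_left hkey htpos]

end aux

/-- failure of the naive generalisation of the Poincaré
inequality for non-stationary reference measures. -/
theorem naive_PI_fails_off_steady_state
    {Z : Type*} [Fintype Z] (hcard : 2 ≤ Fintype.card Z)
    (M : Z → Z → ℝ) (hgen : IsGenerator M) (hirr : IsIrreducibleGen M)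
    (π : Z → ℝ) (hπ : IsPosProb π)
    (hsteady : ∀ z' : Z, ∑ z : Z, π z * M z z' = 0)
    (ζ : Z → ℝ) (hζ : IsPosProb ζ) :
    (ζ ≠ π → ∀ K : ℝ, ∃ f : Z → ℝ, Nonconst f ∧
        naiveForm ζ f M / varWrt ζ f < K) ∧
      (∃ α : ℝ, 0 < α ∧ ∀ f : Z → ℝ, α * varWrt π f ≤ naiveForm π f M) ∧
      (0 < sInf { r : ℝ | ∃ f : Z → ℝ, Nonconst f ∧
          r = naiveForm ζ f M / varWrt ζ f } ↔ ζ = π) := by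
  classical
  obtain ⟨α, hα, hP⟩ := poincare hcard M hgen hirr π hπ
  have hBnd : ∀ f : Z → ℝ, α * varWrt π f ≤ naiveForm π f M := fun f => by
    rw [naive_eq_dirichlet M hgen.2 π hsteady f]
    exact hP f
  have hUnb := naive_unbounded hcard M hgen hirr π hπ hsteady ζ hζ
  refine ⟨hUnb, ⟨α, hα, hBnd⟩, ?_, ?_⟩
  · intro hpos
    by_contra hne
    have hnb : ¬ BddBelow { r : ℝ | ∃ f : Z → ℝ, Nonconst f ∧
        r = naiveForm ζ f M / varWrt ζ f } := by
      rintro ⟨c, hc⟩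
      obtain ⟨f, hf, hlt⟩ := hUnb hne c
      exact absurd (hc ⟨f, hf, rfl⟩) (not_le.mpr hlt)
    rw [Real.sInf_of_not_bddBelow hnb] at hpos
    exact lt_irrefl 0 hpos
  · rintro rfl
    obtain ⟨z0, z1, hz01⟩ := Fintype.exists_pair_of_one_lt_card (α := Z) (by omega)
    have hfnc : Nonconst (fun z : Z => if z = z0 then (1:ℝ) else 0) :=
      ⟨z0, z1, by simp [hz01.symm]⟩
    have hne2 : Set.Nonempty { r : ℝ | ∃ f : Z → ℝ, Nonconst f ∧
        r = naiveForm ζ f M / varWrt ζ f } :=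
      ⟨_, _, hfnc, rfl⟩
    have hlb : ∀ r ∈ { r : ℝ | ∃ f : Z → ℝ, Nonconst f ∧
        r = naiveForm ζ f M / varWrt ζ f }, α ≤ r := by
      rintro r ⟨f, hf, rfl⟩
      rw [le_div_iff₀ (varWrt_pos ζ hζ f hf)]
      exact hBnd f
    exact lt_of_lt_of_le hα (le_csInf hne2 hlb)
end
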